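/- arXiv:0909.4859 — 4 statements merged into one kernel-verified Lean document; each statement's English description precedes it below -/
import Mathlib

section
/- Let (N(t), t ≥ 0) be the block-counting process of Kingman's coalescent started with n blocks: N is a pure death process jumping from k to k−1 at rate C(k,2) = k(k−1)/2. Let t = t(n) → 0 with 1/t(n) = o(n). Then for any 0 < ε < 1/2 and n sufficiently large, P(1−ε < t·N(t)/2 < 1+ε) > 1 − exp(−ε²/t). -/
/-!
Write `S_m = E_{m+1} + ⋯ + E_n`, so that `N(T) ≤ m ↔ S_m ≤ T`. With `m₁ ≈ 2(1+ε)/T` and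
`m₀ ≈ 2(1-ε)/T`, the event `S_{m₁} ≤ T < S_{m₀}` forces `m₀ < N(T) ≤ m₁`, i.e.
`1 - ε < T N(T)/2 < 1 + ε`. The `E_k` are independent exponentials of rate `λ_k = k(k-1)/2`, and
`∑_{k>m} 1/λ_k = 2/m - 2/n`, `∑_{k>m} 1/λ_k² ≤ 4/(3m³)`. A Chernoff bound with `θ` of order `εm²`
(admissible since `λ_k ≥ m²/2` for `k > m`) bounds each of the two complementary events by
`exp(-(21/20) ε²/T)`, and since `ε²/T ≥ 40` twice this is below `exp(-ε²/T)`.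
-/

open MeasureTheory ProbabilityTheory Real Filter
open scoped ENNReal

section ExponentialDistribution

variable {Ω : Type*} {mΩ : MeasurableSpace Ω} {μ : Measure Ω} {r u : ℝ}

lemma map_eq_expMeasure_of_tail [IsProbabilityMeasure μ] {X : Ω → ℝ} (hX : Measurable X)
    (hr : 0 < r) (htail : ∀ s, 0 ≤ s → μ {ω | s < X ω} = ENNReal.ofReal (exp (-r * s))) :
    μ.map X = expMeasure r := by
  have := isProbabilityMeasure_expMeasure hr
  have := Measure.isProbabilityMeasure_map (μ := μ) hX.aemeasurable
  refine Measure.ext_of_Iic _ _ fun a => ?_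
  have hexp : expMeasure r (Set.Iic a) = ENNReal.ofReal (if 0 ≤ a then 1 - exp (-(r * a)) else 0) :=
    (withDensity_apply _ measurableSet_Iic).trans (lintegral_exponentialPDF_eq_antiDeriv hr a)
  have hIic : X ⁻¹' Set.Iic a = {ω | a < X ω}ᶜ := by ext; simp
  rw [Measure.map_apply hX measurableSet_Iic, hexp, hIic,
    prob_compl_eq_one_sub (measurableSet_lt measurable_const hX)]
  split_ifs with ha
  · rw [htail a ha, ENNReal.ofReal_sub _ (exp_pos _).le, ENNReal.ofReal_one, neg_mul]
  · have h0 : μ {ω | 0 < X ω} = 1 := by simpa using htail 0 le_rfl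
    rw [ENNReal.ofReal_zero, tsub_eq_zero_iff_le, ← h0]
    exact measure_mono fun ω (hω : 0 < X ω) => (not_le.mp ha).trans hω

lemma exponentialPDFReal_smul_exp_mul (hr : 0 < r) :
    (fun x => (exponentialPDFReal r x).toNNReal • exp (u * x))
      = (Set.Ici 0).indicator fun x => r * exp (-((r - u) * x)) := by
  funext x
  rw [NNReal.smul_def, Real.coe_toNNReal _ (exponentialPDFReal_nonneg hr x), smul_eq_mul,
    exponentialPDFReal, gammaPDFReal, Set.indicator_apply]
  split_ifs with hx hmem hmem
  · simp only [rpow_one, Gamma_one, div_one, sub_self, rpow_zero, mul_one]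
    rw [mul_assoc, ← exp_add]
    ring_nf
  · exact absurd hx hmem
  · exact absurd hmem hx
  · exact zero_mul _

lemma expMeasure_eq_withDensity (r : ℝ) :
    expMeasure r = volume.withDensity fun x => ((exponentialPDFReal r x).toNNReal : ℝ≥0∞) := rfl

lemma integrable_exp_mul_expMeasure (hr : 0 < r) (hu : u < r) :
    Integrable (fun x => exp (u * x)) (expMeasure r) := by
  rw [expMeasure_eq_withDensity, integrable_withDensity_iff_integrable_smul
    (measurable_exponentialPDFReal r).real_toNNReal, exponentialPDFReal_smul_exp_mul hr,
    integrable_indicator_iff measurableSet_Ici, integrableOn_Ici_iff_integrableOn_Ioi]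
  have h : IntegrableOn (fun x => r * exp (-(r - u) * x)) (Set.Ioi 0) :=
    (exp_neg_integrableOn_Ioi 0 (sub_pos.mpr hu)).const_mul r
  simpa only [neg_mul] using h

lemma mgf_id_expMeasure (hr : 0 < r) (hu : u < r) : mgf id (expMeasure r) u = r / (r - u) := by
  have hexp : ∫ x in Set.Ioi (0 : ℝ), exp (-((r - u) * x)) = (r - u)⁻¹ := by
    simpa only [mul_zero, integral_exp_neg_Ioi_zero, smul_eq_mul, mul_one] using
      integral_comp_mul_left_Ioi (fun y => exp (-y)) 0 (sub_pos.mpr hu)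
  rw [mgf, expMeasure_eq_withDensity, integral_withDensity_eq_integral_smul
    (measurable_exponentialPDFReal r).real_toNNReal]
  simp only [id_eq]
  rw [exponentialPDFReal_smul_exp_mul hr, integral_indicator measurableSet_Ici,
    integral_Ici_eq_integral_Ioi, integral_const_mul, hexp, div_eq_mul_inv]

lemma integrable_exp_mul_of_map_eq_expMeasure {X : Ω → ℝ} (hX : Measurable X)
    (hlaw : μ.map X = expMeasure r) (hr : 0 < r) (hu : u < r) :
    Integrable (fun ω => exp (u * X ω)) μ := by
  have := integrable_exp_mul_expMeasure hr hu
  rw [← hlaw, integrable_map_measure (by fun_prop) hX.aemeasurable] at this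
  exact this

lemma mgf_of_map_eq_expMeasure {X : Ω → ℝ} (hX : Measurable X)
    (hlaw : μ.map X = expMeasure r) (hr : 0 < r) (hu : u < r) :
    mgf X μ u = r / (r - u) := by
  rw [← mgf_id_map hX.aemeasurable, hlaw, mgf_id_expMeasure hr hu]

end ExponentialDistribution

lemma div_sub_le_exp {r θ c : ℝ} (hr : 0 < r) (hc : c < 1) (hθc : θ ≤ c * r) :
    r / (r - θ) ≤ exp (θ / r + θ ^ 2 / ((1 - c) * r ^ 2)) := by
  have hθr : 0 < r - θ := by nlinarith
  have h1c : 0 < 1 - c := sub_pos.mpr hc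
  calc r / (r - θ) ≤ θ / r + θ ^ 2 / ((1 - c) * r ^ 2) + 1 := by
        rw [div_le_iff₀ hθr]
        field_simp
        nlinarith [sq_nonneg θ]
    _ ≤ exp (θ / r + θ ^ 2 / ((1 - c) * r ^ 2)) := add_one_le_exp _

lemma div_add_le_exp {r θ : ℝ} (hr : 0 < r) (hθ : 0 ≤ θ) :
    r / (r + θ) ≤ exp (-(θ / r) + θ ^ 2 / (2 * r ^ 2)) := by
  set x := θ / r
  have hx : 0 ≤ x := div_nonneg hθ hr.le
  have hquad : x - x ^ 2 / 2 ≤ 2 * x / (x + 2) := by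
    rw [le_div_iff₀ (by linarith)]
    nlinarith [pow_nonneg hx 3]
  have hlog : x - x ^ 2 / 2 ≤ log (1 + x) := hquad.trans (le_log_one_add_of_nonneg hx)
  calc r / (r + θ) = exp (-log (1 + x)) := by
        rw [exp_neg, exp_log (by positivity), one_add_div hr.ne', inv_div]
    _ ≤ exp (-(θ / r) + θ ^ 2 / (2 * r ^ 2)) := by
        gcongr
        have : θ ^ 2 / (2 * r ^ 2) = x ^ 2 / 2 := by rw [div_pow]; ring
        linarith

section SumOfExponentials

variable {Ω ι : Type*} {mΩ : MeasurableSpace Ω} {μ : Measure Ω} {X : ι → Ω → ℝ} {r : ι → ℝ}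
  {s : Finset ι}

lemma ProbabilityTheory.iIndepFun.integrable_exp_mul_sum_of_map_eq_expMeasure
    (hindep : iIndepFun X μ) (hmeas : ∀ i, Measurable (X i)) (hlaw : ∀ i ∈ s, μ.map (X i) = expMeasure (r i))
    (hr : ∀ i ∈ s, 0 < r i) {u : ℝ} (hu : ∀ i ∈ s, u < r i) :
    Integrable (fun ω => exp (u * (∑ i ∈ s, X i) ω)) μ :=
  have := hindep.isProbabilityMeasure
  hindep.integrable_exp_mul_sum hmeas fun i hi =>
    integrable_exp_mul_of_map_eq_expMeasure (hmeas i) (hlaw i hi) (hr i hi) (hu i hi)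

lemma ProbabilityTheory.iIndepFun.mgf_sum_of_map_eq_expMeasure (hindep : iIndepFun X μ)
    (hmeas : ∀ i, Measurable (X i)) (hlaw : ∀ i ∈ s, μ.map (X i) = expMeasure (r i))
    (hr : ∀ i ∈ s, 0 < r i) {u : ℝ} (hu : ∀ i ∈ s, u < r i) :
    mgf (∑ i ∈ s, X i) μ u = ∏ i ∈ s, r i / (r i - u) := by
  rw [hindep.mgf_sum hmeas]
  exact Finset.prod_congr rfl fun i hi =>
    mgf_of_map_eq_expMeasure (hmeas i) (hlaw i hi) (hr i hi) (hu i hi)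

lemma ProbabilityTheory.iIndepFun.measureReal_le_sum_le_exp (hindep : iIndepFun X μ)
    (hmeas : ∀ i, Measurable (X i)) (hlaw : ∀ i ∈ s, μ.map (X i) = expMeasure (r i))
    (hr : ∀ i ∈ s, 0 < r i) {θ c : ℝ} (hθ : 0 ≤ θ) (hc : c < 1) (hθc : ∀ i ∈ s, θ ≤ c * r i)
    (T : ℝ) :
    μ.real {ω | T ≤ ∑ i ∈ s, X i ω}
      ≤ exp (-θ * T + θ * ∑ i ∈ s, 1 / r i + θ ^ 2 / (1 - c) * ∑ i ∈ s, 1 / r i ^ 2) := by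
  have := hindep.isProbabilityMeasure
  have hθr : ∀ i ∈ s, θ < r i := fun i hi =>
    (hθc i hi).trans_lt (mul_lt_of_lt_one_left (hr i hi) hc)
  have hchernoff := measure_ge_le_exp_mul_mgf T hθ
    (hindep.integrable_exp_mul_sum_of_map_eq_expMeasure hmeas hlaw hr hθr)
  rw [hindep.mgf_sum_of_map_eq_expMeasure hmeas hlaw hr hθr] at hchernoff
  simp only [Finset.sum_apply] at hchernoff
  refine hchernoff.trans ?_
  calc exp (-θ * T) * ∏ i ∈ s, r i / (r i - θ)
      ≤ exp (-θ * T) * ∏ i ∈ s, exp (θ / r i + θ ^ 2 / ((1 - c) * r i ^ 2)) := by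
        refine mul_le_mul_of_nonneg_left (Finset.prod_le_prod (fun i hi => ?_) fun i hi => ?_)
          (exp_pos _).le
        · exact div_nonneg (hr i hi).le (sub_pos.mpr (hθr i hi)).le
        · exact div_sub_le_exp (hr i hi) hc (hθc i hi)
    _ = _ := by
        rw [← exp_sum, ← exp_add, Finset.mul_sum, Finset.mul_sum, add_assoc,
          ← Finset.sum_add_distrib]
        congr 2
        exact Finset.sum_congr rfl fun i _ => by simp only [div_eq_mul_inv, mul_inv]; ring

lemma ProbabilityTheory.iIndepFun.measureReal_sum_le_le_exp (hindep : iIndepFun X μ)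
    (hmeas : ∀ i, Measurable (X i)) (hlaw : ∀ i ∈ s, μ.map (X i) = expMeasure (r i))
    (hr : ∀ i ∈ s, 0 < r i) {θ : ℝ} (hθ : 0 ≤ θ) (T : ℝ) :
    μ.real {ω | ∑ i ∈ s, X i ω ≤ T}
      ≤ exp (θ * T - θ * ∑ i ∈ s, 1 / r i + θ ^ 2 / 2 * ∑ i ∈ s, 1 / r i ^ 2) := by
  have := hindep.isProbabilityMeasure
  have hθr : ∀ i ∈ s, -θ < r i := fun i hi => (neg_nonpos.mpr hθ).trans_lt (hr i hi)
  have hchernoff := measure_le_le_exp_mul_mgf T (neg_nonpos.mpr hθ)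
    (hindep.integrable_exp_mul_sum_of_map_eq_expMeasure hmeas hlaw hr hθr)
  rw [hindep.mgf_sum_of_map_eq_expMeasure hmeas hlaw hr hθr] at hchernoff
  simp only [Finset.sum_apply, neg_neg, sub_neg_eq_add] at hchernoff
  refine hchernoff.trans ?_
  calc exp (θ * T) * ∏ i ∈ s, r i / (r i + θ)
      ≤ exp (θ * T) * ∏ i ∈ s, exp (-(θ / r i) + θ ^ 2 / (2 * r i ^ 2)) := by
        refine mul_le_mul_of_nonneg_left (Finset.prod_le_prod (fun i hi => ?_) fun i hi => ?_)
          (exp_pos _).le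
        · exact div_nonneg (hr i hi).le (by linarith [hr i hi])
        · exact div_add_le_exp (hr i hi) hθ
    _ = _ := by
        rw [← exp_sum, ← exp_add, Finset.mul_sum, Finset.mul_sum, sub_eq_add_neg, add_assoc,
          ← Finset.sum_neg_distrib, ← Finset.sum_add_distrib]
        congr 2
        exact Finset.sum_congr rfl fun i _ => by simp only [div_eq_mul_inv, mul_inv]; ring

end SumOfExponentials

noncomputable def kingmanRate (k : ℕ) : ℝ := k * (k - 1) / 2

lemma sq_div_two_le_kingmanRate {m k : ℕ} (hk : m + 1 ≤ k) : (m : ℝ) ^ 2 / 2 ≤ kingmanRate k := by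
  have : (m : ℝ) + 1 ≤ k := by exact_mod_cast hk
  unfold kingmanRate
  nlinarith [m.cast_nonneg (α := ℝ)]

lemma kingmanRate_pos {k : ℕ} (hk : 2 ≤ k) : 0 < kingmanRate k := by
  have : (2 : ℝ) ≤ k := by exact_mod_cast hk
  unfold kingmanRate
  nlinarith

lemma sum_Icc_sub_telescope (f : ℕ → ℝ) {m n : ℕ} (h : m ≤ n) :
    ∑ k ∈ Finset.Icc (m + 1) n, (f (k - 1) - f k) = f m - f n := by
  rw [← Finset.Ico_add_one_right_eq_Icc, ← Finset.sum_Ico_add' (fun k => f (k - 1) - f k)]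
  simp only [Nat.add_sub_cancel]
  rw [← neg_sub (f n), ← Finset.sum_Ico_sub f h, ← Finset.sum_neg_distrib]
  simp only [neg_sub]

lemma one_div_kingmanRate {k : ℕ} (hk : 2 ≤ k) :
    1 / kingmanRate k = 2 / ((k - 1 : ℕ) : ℝ) - 2 / k := by
  have hk₁ : (1 : ℝ) < k := by exact_mod_cast hk
  have : (k : ℝ) - 1 ≠ 0 := by linarith
  have : (k : ℝ) ≠ 0 := by linarith
  rw [kingmanRate, Nat.cast_sub (by omega : 1 ≤ k), Nat.cast_one]
  field_simp
  ring

lemma sum_Icc_one_div_kingmanRate {m n : ℕ} (hm : 1 ≤ m) (hmn : m ≤ n) :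
    ∑ k ∈ Finset.Icc (m + 1) n, 1 / kingmanRate k = 2 / m - 2 / n := by
  rw [← sum_Icc_sub_telescope (fun j => 2 / (j : ℝ)) hmn]
  exact Finset.sum_congr rfl fun k hk => one_div_kingmanRate (by grind)

lemma one_div_kingmanRate_sq_le {k : ℕ} (hk : 2 ≤ k) :
    1 / kingmanRate k ^ 2 ≤ 4 / (3 * ((k - 1 : ℕ) : ℝ) ^ 3) - 4 / (3 * (k : ℝ) ^ 3) := by
  have hk₁ : (0 : ℝ) < k - 1 := by
    have : (2 : ℝ) ≤ k := by exact_mod_cast hk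
    linarith
  have hk₀ : (0 : ℝ) < k := by linarith
  rw [kingmanRate, Nat.cast_sub (by omega : 1 ≤ k), Nat.cast_one,
    div_sub_div _ _ (by positivity) (by positivity),
    div_le_div_iff₀ (by positivity) (by positivity)]
  nlinarith [pow_pos hk₁ 3, pow_pos hk₁ 4, mul_pos hk₁ hk₀]

lemma sum_Icc_one_div_kingmanRate_sq_le {m n : ℕ} (hm : 1 ≤ m) (hmn : m ≤ n) :
    ∑ k ∈ Finset.Icc (m + 1) n, 1 / kingmanRate k ^ 2 ≤ 4 / (3 * (m : ℝ) ^ 3) :=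
  calc ∑ k ∈ Finset.Icc (m + 1) n, 1 / kingmanRate k ^ 2
      ≤ ∑ k ∈ Finset.Icc (m + 1) n,
          (4 / (3 * ((k - 1 : ℕ) : ℝ) ^ 3) - 4 / (3 * (k : ℝ) ^ 3)) :=
        Finset.sum_le_sum fun k hk => one_div_kingmanRate_sq_le (by grind)
    _ = 4 / (3 * (m : ℝ) ^ 3) - 4 / (3 * (n : ℝ) ^ 3) :=
        sum_Icc_sub_telescope (fun j => 4 / (3 * (j : ℝ) ^ 3)) hmn
    _ ≤ 4 / (3 * (m : ℝ) ^ 3) := sub_le_self _ (by positivity)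

lemma upper_tail_exponent_le {ε T m : ℝ} (hε0 : 0 < ε) (hε : ε < 1 / 2) (hT : 0 < T)
    (hTε : T ≤ ε / 40) (hm : 0 < m) (hmT : 2 * (1 + ε) ≤ (m + 1) * T) :
    -(3 * ε * m ^ 2 / 8) * T + 3 * ε * m ^ 2 / 8 * (2 / m)
        + (3 * ε * m ^ 2 / 8) ^ 2 / (1 - 3 * ε / 4) * (4 / (3 * m ^ 3))
      ≤ -(21 / 20) * ε ^ 2 / T := by
  set p := m * T
  set q := 3 * ε / (4 * (4 - 3 * ε))
  have hq : q ≤ 3 * ε / 16 + 9 * ε ^ 2 / 40 := by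
    rw [div_le_iff₀ (by linarith)]
    nlinarith
  have hp : 2 + 79 * ε / 40 ≤ p := by linarith
  have hbracket : -(3 / 8) * p + 3 / 4 + q ≤ -(177 / 320) * ε + 9 * ε ^ 2 / 40 := by linarith
  have hkey : p * (-(3 / 8) * p + 3 / 4 + q) ≤ -(21 / 20) * ε := by
    have hB₀ : -(177 / 320) * ε + 9 * ε ^ 2 / 40 ≤ 0 := by nlinarith
    nlinarith [mul_le_mul_of_nonneg_left hbracket (by linarith : (0:ℝ) ≤ p),
      mul_nonpos_of_nonneg_of_nonpos (sub_nonneg.mpr hp) hB₀]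
  calc -(3 * ε * m ^ 2 / 8) * T + 3 * ε * m ^ 2 / 8 * (2 / m)
        + (3 * ε * m ^ 2 / 8) ^ 2 / (1 - 3 * ε / 4) * (4 / (3 * m ^ 3))
      = ε / T * (p * (-(3 / 8) * p + 3 / 4 + q)) := by
        simp only [p, q]
        field_simp
        ring
    _ ≤ ε / T * (-(21 / 20) * ε) := by gcongr
    _ = -(21 / 20) * ε ^ 2 / T := by ring

lemma lower_tail_exponent_le {ε T m n : ℝ} (hε0 : 0 < ε) (hε : ε < 1 / 2) (hT : 0 < T)
    (hTε : T ≤ ε / 40) (hm : 0 < m) (hmT : m * T ≤ 2 * (1 - ε))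
    (hmT' : 2 * (1 - ε) ≤ (m + 1) * T) (hmn : m / n ≤ ε / 50) :
    3 * ε * m ^ 2 / 2 * T - 3 * ε * m ^ 2 / 2 * (2 / m - 2 / n)
        + (3 * ε * m ^ 2 / 2) ^ 2 / 2 * (4 / (3 * m ^ 3))
      ≤ -(21 / 20) * ε ^ 2 / T := by
  set p := m * T
  have hkey : 3 / 2 * p * (p - 2 + 2 * (m / n) + ε) ≤ -(21 / 20) * ε := by
    nlinarith
  calc 3 * ε * m ^ 2 / 2 * T - 3 * ε * m ^ 2 / 2 * (2 / m - 2 / n)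
        + (3 * ε * m ^ 2 / 2) ^ 2 / 2 * (4 / (3 * m ^ 3))
      = ε / T * (3 / 2 * p * (p - 2 + 2 * (m / n) + ε)) := by
        simp only [p]
        field_simp
        ring
    _ ≤ ε / T * (-(21 / 20) * ε) := by gcongr
    _ = -(21 / 20) * ε ^ 2 / T := by ring

section KingmanTails

variable {Ω : Type*} {mΩ : MeasurableSpace Ω} {μ : Measure Ω} {E : ℕ → Ω → ℝ} {m n : ℕ}
  {ε T : ℝ}

lemma kingman_upper_tail_le (hindep : iIndepFun E μ) (hmeas : ∀ k, Measurable (E k))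
    (hlaw : ∀ k, 2 ≤ k → k ≤ n → μ.map (E k) = expMeasure (kingmanRate k))
    (hm : 1 ≤ m) (hmn : m ≤ n) (hε0 : 0 < ε) (hε : ε < 1 / 2) (hT : 0 < T) (hTε : T ≤ ε / 40)
    (hmT : 2 * (1 + ε) ≤ (m + 1) * T) :
    μ.real {ω | T ≤ ∑ k ∈ Finset.Icc (m + 1) n, E k ω} ≤ exp (-(21 / 20) * ε ^ 2 / T) := by
  have hmem : ∀ k ∈ Finset.Icc (m + 1) n, 2 ≤ k ∧ k ≤ n ∧ m + 1 ≤ k := fun k hk => by grind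
  have hθc : ∀ k ∈ Finset.Icc (m + 1) n, 3 * ε * m ^ 2 / 8 ≤ 3 * ε / 4 * kingmanRate k :=
    fun k hk => by nlinarith [sq_div_two_le_kingmanRate (hmem k hk).2.2]
  refine (hindep.measureReal_le_sum_le_exp hmeas (fun k hk => hlaw k (hmem k hk).1 (hmem k hk).2.1)
    (fun k hk => kingmanRate_pos (hmem k hk).1) (by positivity) (by linarith) hθc T).trans ?_
  refine exp_le_exp.mpr (le_trans ?_ (upper_tail_exponent_le hε0 hε hT hTε (by positivity) hmT))
  have h1c : 0 < 1 - 3 * ε / 4 := by linarith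
  rw [sum_Icc_one_div_kingmanRate hm hmn]
  gcongr
  · linarith [show (0 : ℝ) ≤ 2 / n by positivity]
  · exact sum_Icc_one_div_kingmanRate_sq_le hm hmn

lemma kingman_lower_tail_le (hindep : iIndepFun E μ) (hmeas : ∀ k, Measurable (E k))
    (hlaw : ∀ k, 2 ≤ k → k ≤ n → μ.map (E k) = expMeasure (kingmanRate k))
    (hm : 1 ≤ m) (hmn : m ≤ n) (hε0 : 0 < ε) (hε : ε < 1 / 2) (hT : 0 < T) (hTε : T ≤ ε / 40)
    (hmT : m * T ≤ 2 * (1 - ε)) (hmT' : 2 * (1 - ε) ≤ (m + 1) * T) (hmn' : (m : ℝ) / n ≤ ε / 50) :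
    μ.real {ω | ∑ k ∈ Finset.Icc (m + 1) n, E k ω ≤ T} ≤ exp (-(21 / 20) * ε ^ 2 / T) := by
  have hmem : ∀ k ∈ Finset.Icc (m + 1) n, 2 ≤ k ∧ k ≤ n := fun k hk => by grind
  refine (hindep.measureReal_sum_le_le_exp hmeas (fun k hk => hlaw k (hmem k hk).1 (hmem k hk).2)
    (fun k hk => kingmanRate_pos (hmem k hk).1) (θ := 3 * ε * m ^ 2 / 2) (by positivity) T).trans ?_
  refine exp_le_exp.mpr
    (le_trans ?_ (lower_tail_exponent_le hε0 hε hT hTε (by positivity) hmT hmT' hmn'))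
  rw [sum_Icc_one_div_kingmanRate hm hmn]
  gcongr
  exact sum_Icc_one_div_kingmanRate_sq_le hm hmn

end KingmanTails

section Indices

variable {ε T : ℝ} {n : ℕ}

lemma exists_upper_index (hε0 : 0 < ε) (hε : ε < 1 / 2) (hT : 0 < T) (hT1 : T < 1)
    (hTn : 3 ≤ T * n) :
    ∃ m : ℕ, 1 ≤ m ∧ m ≤ n ∧ m * T < 2 * (1 + ε) ∧ 2 * (1 + ε) ≤ (m + 1) * T := by
  set x := 2 * (1 + ε) / T
  have hx : 0 < x := by positivity
  have hceil : 1 ≤ ⌈x⌉₊ := Nat.one_le_ceil_iff.mpr hx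
  have hcast : ((⌈x⌉₊ - 1 : ℕ) : ℝ) = ⌈x⌉₊ - 1 := by rw [Nat.cast_sub hceil, Nat.cast_one]
  have hlt : ((⌈x⌉₊ - 1 : ℕ) : ℝ) * T < 2 * (1 + ε) := by
    rw [hcast, ← lt_div_iff₀ hT]
    linarith [Nat.ceil_lt_add_one hx.le]
  have hle : 2 * (1 + ε) ≤ (((⌈x⌉₊ - 1 : ℕ) : ℝ) + 1) * T := by
    rw [hcast, sub_add_cancel, ← div_le_iff₀ hT]
    exact Nat.le_ceil x
  refine ⟨⌈x⌉₊ - 1, ?_, ?_, hlt, hle⟩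
  · have : (1 : ℝ) ≤ ((⌈x⌉₊ - 1 : ℕ) : ℝ) := by nlinarith
    exact_mod_cast this
  · have : ((⌈x⌉₊ - 1 : ℕ) : ℝ) ≤ n := by nlinarith
    exact_mod_cast this

lemma exists_lower_index (hε0 : 0 < ε) (hε : ε < 1 / 2) (hT : 0 < T) (hT1 : T < 1)
    (hTn : 100 / ε ≤ T * n) :
    ∃ m : ℕ, 1 ≤ m ∧ m ≤ n ∧ m * T ≤ 2 * (1 - ε) ∧ 2 * (1 - ε) < (m + 1) * T
      ∧ (m : ℝ) / n ≤ ε / 50 := by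
  set x := 2 * (1 - ε) / T
  have hle : (⌊x⌋₊ : ℝ) * T ≤ 2 * (1 - ε) :=
    (le_div_iff₀ hT).mp (Nat.floor_le (div_nonneg (by linarith) hT.le))
  have hlt : 2 * (1 - ε) < (⌊x⌋₊ + 1) * T := (div_lt_iff₀ hT).mp (Nat.lt_floor_add_one x)
  have hTn' : 200 ≤ T * n := le_trans (by rw [le_div_iff₀ hε0]; linarith) hTn
  have hn : (0 : ℝ) < n := by nlinarith
  have hratio : (⌊x⌋₊ : ℝ) / n ≤ ε / 50 := by
    rw [div_le_iff₀ hn]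
    have := mul_le_mul_of_nonneg_left hTn (by positivity : (0 : ℝ) ≤ ε)
    rw [mul_div_cancel₀ _ hε0.ne'] at this
    nlinarith
  refine ⟨⌊x⌋₊, ?_, ?_, hle, hlt, hratio⟩
  · exact Nat.floor_pos.mpr ((le_div_iff₀ hT).mpr (by linarith))
  · have : (⌊x⌋₊ : ℝ) ≤ n := by
      rw [div_le_iff₀ hn] at hratio
      nlinarith
    exact_mod_cast this

end Indices

lemma two_mul_exp_lt_exp {a : ℝ} (ha : 20 ≤ a) : 2 * exp (-(21 / 20) * a) < exp (-a) := by
  have h2 : 2 < exp (a / 20) :=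
    calc (2 : ℝ) = 1 + 1 := by norm_num
      _ < exp 1 := add_one_lt_exp one_ne_zero
      _ ≤ exp (a / 20) := exp_le_exp.mpr (by linarith)
  calc 2 * exp (-(21 / 20) * a) < exp (a / 20) * exp (-(21 / 20) * a) := by gcongr
    _ = exp (-a) := by rw [← exp_add]; ring_nf

lemma ofReal_one_sub_lt_measure {Ω : Type*} {mΩ : MeasurableSpace Ω} {μ : Measure Ω}
    [IsProbabilityMeasure μ] {A G : Set Ω} (hA : MeasurableSet A) (hAG : Aᶜ ⊆ G) {p : ℝ}
    (hp1 : p ≤ 1) (hAp : μ.real A < p) :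
    ENNReal.ofReal (1 - p) < μ G :=
  calc ENNReal.ofReal (1 - p) < ENNReal.ofReal (μ.real Aᶜ) := by
        rw [ENNReal.ofReal_lt_ofReal_iff', probReal_compl_eq_one_sub hA]
        constructor <;> linarith
    _ = μ Aᶜ := ofReal_measureReal
    _ ≤ μ G := measure_mono hAG

theorem kingman_blockCount_concentration {Ω : Type*} {mΩ : MeasurableSpace Ω} {μ : Measure Ω}
    [IsProbabilityMeasure μ] {E : ℕ → Ω → ℝ} {N : ℝ → Ω → ℕ} {n : ℕ} {ε T : ℝ}
    (hmeas : ∀ k, Measurable (E k)) (hindep : iIndepFun E μ)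
    (hlaw : ∀ k, 2 ≤ k → k ≤ n → μ.map (E k) = expMeasure (kingmanRate k))
    (hN : ∀ ω, ∀ m : ℕ, 1 ≤ m → (N T ω ≤ m ↔ ∑ k ∈ Finset.Icc (m + 1) n, E k ω ≤ T))
    (hε0 : 0 < ε) (hε : ε < 1 / 2) (hT : 0 < T) (hTε : T ≤ ε ^ 2 / 40)
    (hTn : 200 / ε ≤ T * n) :
    ENNReal.ofReal (1 - exp (-(ε ^ 2) / T))
      < μ {ω | 1 - ε < T * N T ω / 2 ∧ T * N T ω / 2 < 1 + ε} := by
  have hTε' : T ≤ ε / 40 := by nlinarith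
  have hT1 : T < 1 := by linarith
  have h200 : 400 ≤ 200 / ε := by rw [le_div_iff₀ hε0]; linarith
  obtain ⟨m₁, hm₁, hm₁n, hm₁T, hm₁T'⟩ := exists_upper_index hε0 hε hT hT1 (by linarith)
  obtain ⟨m₀, hm₀, hm₀n, hm₀T, hm₀T', hm₀n'⟩ :=
    exists_lower_index hε0 hε hT hT1 ((div_le_div_of_nonneg_right (by norm_num) hε0.le).trans hTn)
  set A₁ := {ω | T ≤ ∑ k ∈ Finset.Icc (m₁ + 1) n, E k ω}
  set A₀ := {ω | ∑ k ∈ Finset.Icc (m₀ + 1) n, E k ω ≤ T}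
  have hgood : (A₁ ∪ A₀)ᶜ ⊆ {ω | 1 - ε < T * N T ω / 2 ∧ T * N T ω / 2 < 1 + ε} := by
    intro ω hω
    simp only [Set.compl_union, Set.mem_inter_iff, Set.mem_compl_iff, A₁, A₀, Set.mem_ofPred_eq,
      not_le] at hω
    have hN₁ : (N T ω : ℝ) ≤ m₁ := by exact_mod_cast (hN ω m₁ hm₁).mpr hω.1.le
    have hN₀ : (m₀ : ℝ) + 1 ≤ N T ω := by
      exact_mod_cast Nat.succ_le_of_lt (not_le.mp fun h => (hω.2.not_ge ((hN ω m₀ hm₀).mp h)))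
    constructor <;> nlinarith
  have hmeas_sum : ∀ m, Measurable fun ω => ∑ k ∈ Finset.Icc (m + 1) n, E k ω :=
    fun m => Finset.measurable_sum _ fun k _ => hmeas k
  refine ofReal_one_sub_lt_measure ((measurableSet_le measurable_const (hmeas_sum m₁)).union
    (measurableSet_le (hmeas_sum m₀) measurable_const)) hgood (exp_le_one_iff.mpr ?_) ?_
  · exact div_nonpos_of_nonpos_of_nonneg (neg_nonpos.mpr (sq_nonneg ε)) hT.le
  calc μ.real (A₁ ∪ A₀) ≤ μ.real A₁ + μ.real A₀ := measureReal_union_le _ _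
    _ ≤ exp (-(21 / 20) * ε ^ 2 / T) + exp (-(21 / 20) * ε ^ 2 / T) := add_le_add
        (kingman_upper_tail_le hindep hmeas hlaw hm₁ hm₁n hε0 hε hT hTε' hm₁T')
        (kingman_lower_tail_le hindep hmeas hlaw hm₀ hm₀n hε0 hε hT hTε' hm₀T hm₀T'.le
          hm₀n')
    _ = 2 * exp (-(21 / 20) * (ε ^ 2 / T)) := by rw [mul_div_assoc]; ring
    _ < exp (-(ε ^ 2 / T)) := two_mul_exp_lt_exp (by rw [le_div_iff₀ hT]; linarith)
    _ = exp (-(ε ^ 2) / T) := by rw [neg_div]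

/-- large deviations for the block-counting process `N` of Kingman's
coalescent started with `n` blocks (a pure death process jumping from `k` to `k-1`
at rate `k(k-1)/2`, encoded via its independent exponential holding times `E k`:
`N(s) ≤ m` iff the sum of the holding times at states `m+1,…,n` is at most `s`).
If `t(n) → 0` with `1/t(n) = o(n)`, then for `0 < ε < 1/2` and `n` large,
`P(1−ε < t·N(t)/2 < 1+ε) > 1 − exp(−ε²/t)`. -/
theorem stmt6 (t : ℕ → ℝ) (ht_pos : ∀ n, 0 < t n)
    (ht0 : Tendsto t atTop (nhds 0))
    (hto : Tendsto (fun n : ℕ => 1 / (t n * n)) atTop (nhds 0))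
    (ε : ℝ) (hε0 : 0 < ε) (hε : ε < 1 / 2) :
    ∃ n₀ : ℕ, ∀ n : ℕ, n₀ ≤ n →
      ∀ (Ω : Type) [MeasureSpace Ω] [IsProbabilityMeasure (ℙ : Measure Ω)]
        (E : ℕ → Ω → ℝ) (N : ℝ → Ω → ℕ),
        (∀ k, Measurable (E k)) →
        iIndepFun E ℙ →
        (∀ k, 2 ≤ k → k ≤ n → ∀ s : ℝ, 0 ≤ s →
          ℙ {ω | s < E k ω}
            = ENNReal.ofReal (Real.exp (-((k : ℝ) * ((k : ℝ) - 1) / 2) * s))) →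
        (∀ s : ℝ, 0 ≤ s → ∀ ω, ∀ m : ℕ, 1 ≤ m →
          (N s ω ≤ m ↔ ∑ k ∈ Finset.Icc (m + 1) n, E k ω ≤ s)) →
        ENNReal.ofReal (1 - Real.exp (-(ε ^ 2) / t n)) <
          ℙ {ω | 1 - ε < t n * (N (t n) ω : ℝ) / 2 ∧ t n * (N (t n) ω : ℝ) / 2 < 1 + ε} := by
  have hsmall : ∀ᶠ n in atTop, t n ≤ ε ^ 2 / 40 := ht0.eventually (ge_mem_nhds (by positivity))
  have hlarge : ∀ᶠ n : ℕ in atTop, 200 / ε ≤ t n * n := by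
    filter_upwards [hto.eventually (gt_mem_nhds (by positivity : 0 < ε / 200)),
      eventually_ge_atTop 1] with n hn hn1
    have htn : 0 < t n * n := mul_pos (ht_pos n) (by exact_mod_cast hn1)
    simpa only [one_div_div] using ((one_div_lt htn (by positivity)).mp hn).le
  obtain ⟨n₀, hn₀⟩ := eventually_atTop.mp (hsmall.and hlarge)
  refine ⟨n₀, fun n hn Ω _ _ E N hmeas hindep hE hN => ?_⟩
  exact kingman_blockCount_concentration hmeas hindep
    (fun k hk2 hkn => map_eq_expMeasure_of_tail (hmeas k) (kingmanRate_pos hk2) (hE k hk2 hkn))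
    (fun ω m hm => hN (t n) (ht_pos n).le ω m hm) hε0 hε (ht_pos n) (hn₀ n hn).1 (hn₀ n hn).2
end

section
/- For the Lambda-coalescent with Λ(dx) = g(x)dx where g(x) ~ B x^{1−α} as x → 0 for some B > 0 and α ∈ (1,2), the total coalescence rate λ_n when there are n blocks satisfies λ_n ~ c n^α as n → ∞, for some constant c > 0 depending only on α and B. -/
/-!
With `P_n(x) = 1 - (1-x)^n - n x (1-x)^{n-1}`, the probability that `Bin(n, x) ≥ 2`, we have
`λ_n = ∫_0^1 P_n(x) x^{-2} g(x) dx`. The kernels `P_n(x) x^{-2}` are bounded by `x^{-2}` away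
from `0` while their mass against `x^{1-α}` blows up, so only the behaviour of `g` near `0`
matters and `λ_n ~ B ∫_0^1 P_n(x) x^{-1-α} dx`. Substituting `x = y/n` turns the latter into
`n^α ∫_0^n P_n(y/n) y^{-1-α} dy`, and `P_n(y/n) → 1 - e^{-y} - y e^{-y}` (Poisson limit) with
domination by `min 1 y² · y^{-1-α}`, integrable exactly because `1 < α < 2`.
-/

open MeasureTheory Filter Real Set Topology Asymptotics

noncomputable def binomTailTwo (n : ℕ) (x : ℝ) : ℝ :=
  1 - (1 - x) ^ n - n * x * (1 - x) ^ (n - 1)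

noncomputable def poissonTailTwo (y : ℝ) : ℝ :=
  1 - exp (-y) - y * exp (-y)

section BinomTailTwo

lemma binomTailTwo_succ (n : ℕ) (x : ℝ) :
    binomTailTwo (n + 1) x = binomTailTwo n x + n * x ^ 2 * (1 - x) ^ (n - 1) := by
  rcases n with _ | m
  · simp [binomTailTwo]
  · simp only [binomTailTwo, Nat.add_sub_cancel, pow_succ, Nat.cast_add, Nat.cast_one]
    ring

variable {x : ℝ}

lemma binomTailTwo_nonneg (n : ℕ) (hx1 : x ≤ 1) : 0 ≤ binomTailTwo n x := by
  induction n with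
  | zero => simp [binomTailTwo]
  | succ m ih =>
    rw [binomTailTwo_succ]
    have : 0 ≤ 1 - x := by linarith
    exact add_nonneg ih (mul_nonneg (by positivity) (pow_nonneg this _))

lemma binomTailTwo_le_one (n : ℕ) (hx0 : 0 ≤ x) (hx1 : x ≤ 1) : binomTailTwo n x ≤ 1 := by
  have h : 0 ≤ 1 - x := by linarith
  have h1 : 0 ≤ (1 - x) ^ n := pow_nonneg h n
  have h2 : 0 ≤ n * x * (1 - x) ^ (n - 1) := mul_nonneg (by positivity) (pow_nonneg h _)
  unfold binomTailTwo
  linarith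

lemma binomTailTwo_le_sq (n : ℕ) (hx0 : 0 ≤ x) (hx1 : x ≤ 1) :
    binomTailTwo n x ≤ (n * x) ^ 2 := by
  induction n with
  | zero => simp [binomTailTwo]
  | succ m ih =>
    rw [binomTailTwo_succ]
    have hpow : (1 - x) ^ (m - 1) ≤ 1 := pow_le_one₀ (by linarith) (by linarith)
    have : m * x ^ 2 * (1 - x) ^ (m - 1) ≤ m * x ^ 2 :=
      mul_le_of_le_one_right (by positivity) hpow
    push_cast
    nlinarith

lemma continuous_binomTailTwo (n : ℕ) : Continuous (binomTailTwo n) := by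
  unfold binomTailTwo
  fun_prop

lemma binomTailTwo_div_sq_le_natCast_sq (n : ℕ) (hx : x ∈ Ioc 0 1) :
    binomTailTwo n x / x ^ 2 ≤ (n : ℝ) ^ 2 := by
  rw [div_le_iff₀ (pow_pos hx.1 2), ← mul_pow]
  exact binomTailTwo_le_sq n hx.1.le hx.2

lemma binomTailTwo_div_sq_le_inv_sq (n : ℕ) {t : ℝ} (ht : 0 < t) (hx : x ∈ Ioc t 1) :
    binomTailTwo n x / x ^ 2 ≤ (t ^ 2)⁻¹ := by
  have hx0 : 0 < x := ht.trans hx.1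
  calc binomTailTwo n x / x ^ 2 ≤ 1 / x ^ 2 := by
        gcongr
        exact binomTailTwo_le_one n hx0.le hx.2
    _ ≤ (t ^ 2)⁻¹ := by
        rw [one_div]
        gcongr
        exact hx.1.le

end BinomTailTwo

section PoissonLimit

lemma tendsto_one_sub_div_pow (y : ℝ) :
    Tendsto (fun n : ℕ => (1 - y / n) ^ n) atTop (𝓝 (exp (-y))) := by
  simpa [neg_div, ← sub_eq_add_neg] using tendsto_one_add_div_pow_exp (-y)

lemma tendsto_one_sub_div_pow_pred (y : ℝ) :
    Tendsto (fun n : ℕ => (1 - y / n) ^ (n - 1)) atTop (𝓝 (exp (-y))) := by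
  have hbase : Tendsto (fun n : ℕ => 1 - y / n) atTop (𝓝 1) := by
    simpa using tendsto_const_nhds.sub (tendsto_const_div_atTop_nhds_zero_nat y)
  have hquot := (tendsto_one_sub_div_pow y).div hbase one_ne_zero
  rw [div_one] at hquot
  refine hquot.congr' ?_
  filter_upwards [hbase.eventually_ne one_ne_zero, eventually_ne_atTop 0] with n hn hn0
  rw [Pi.div_apply, ← pow_sub_one_mul hn0, mul_div_cancel_right₀ _ hn]

lemma tendsto_binomTailTwo_div (y : ℝ) :
    Tendsto (fun n : ℕ => binomTailTwo n (y / n)) atTop (𝓝 (poissonTailTwo y)) := by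
  have hlim := ((tendsto_const_nhds (x := (1 : ℝ))).sub (tendsto_one_sub_div_pow y)).sub
    ((tendsto_one_sub_div_pow_pred y).const_mul y)
  refine hlim.congr' ?_
  filter_upwards [eventually_ne_atTop 0] with n hn
  simp only [binomTailTwo]
  rw [mul_div_cancel₀ _ (Nat.cast_ne_zero.mpr hn)]

lemma poissonTailTwo_pos {y : ℝ} (hy : 0 < y) : 0 < poissonTailTwo y := by
  have h := mul_lt_mul_of_pos_left (add_one_lt_exp hy.ne') (exp_pos (-y))
  rw [← exp_add, neg_add_cancel, exp_zero] at h
  unfold poissonTailTwo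
  linarith

lemma poissonTailTwo_le_min {y : ℝ} (hy : 0 ≤ y) : poissonTailTwo y ≤ min 1 (y ^ 2) := by
  have hexp : 1 - y ≤ exp (-y) := by linarith [add_one_le_exp (-y)]
  have h := mul_le_mul_of_nonneg_right hexp (by linarith : 0 ≤ 1 + y)
  have hpos : 0 ≤ exp (-y) * (1 + y) := by positivity
  unfold poissonTailTwo
  refine le_min ?_ ?_ <;> nlinarith

end PoissonLimit

lemma setIntegral_div_sq_mul_rpow_eq (α : ℝ) (f : ℝ → ℝ) {n : ℕ} (hn : n ≠ 0) :
    ∫ x in Ioc 0 1, f x / x ^ 2 * x ^ (1 - α) =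
      (n : ℝ) ^ α * ∫ y in Ioc 0 (n : ℝ), f (y / n) / y ^ 2 * y ^ (1 - α) := by
  have hn0 : (0 : ℝ) < n := by positivity
  have hscale : ∀ y ∈ Ioc (0 : ℝ) n, f (y / n) / (y / n) ^ 2 * (y / n) ^ (1 - α) =
      (n : ℝ) ^ (1 + α) * (f (y / n) / y ^ 2 * y ^ (1 - α)) := by
    intro y hy
    have hy0 : 0 < y := hy.1
    rw [div_rpow hy0.le hn0.le, rpow_add hn0, rpow_sub hn0, rpow_one]
    field_simp
  calc ∫ x in Ioc 0 1, f x / x ^ 2 * x ^ (1 - α)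
      = (n : ℝ)⁻¹ * ∫ y in Ioc 0 (n : ℝ),
          f (y / n) / (y / n) ^ 2 * (y / n) ^ (1 - α) := by
        rw [← intervalIntegral.integral_of_le zero_le_one,
          ← intervalIntegral.integral_of_le hn0.le,
          intervalIntegral.integral_comp_div (fun x => f x / x ^ 2 * x ^ (1 - α)) hn0.ne',
          zero_div, div_self hn0.ne', smul_eq_mul, inv_mul_cancel_left₀ hn0.ne']
    _ = (n : ℝ) ^ α * ∫ y in Ioc 0 (n : ℝ), f (y / n) / y ^ 2 * y ^ (1 - α) := by
        rw [setIntegral_congr_fun measurableSet_Ioc hscale, integral_const_mul, ← mul_assoc,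
          rpow_add hn0, rpow_one, inv_mul_cancel_left₀ hn0.ne']

section Integrals

variable {α : ℝ}

lemma integrableOn_min_one_sq_div_sq_mul_rpow (hα1 : 1 < α) (hα2 : α < 2) :
    IntegrableOn (fun y : ℝ => min 1 (y ^ 2) / y ^ 2 * y ^ (1 - α)) (Ioi 0) := by
  rw [← Ioc_union_Ioi_eq_Ioi zero_le_one, integrableOn_union]
  constructor
  · refine (intervalIntegral.intervalIntegrable_rpow' (r := 1 - α) (by linarith)).1.congr_fun
      (fun y hy => ?_) measurableSet_Ioc
    have hy0 : 0 < y := hy.1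
    rw [min_eq_right (by nlinarith [hy.2]), div_self (by positivity), one_mul]
  · refine (integrableOn_Ioi_rpow_of_lt (by linarith : -1 - α < -1) one_pos).congr_fun
      (fun y (hy : 1 < y) => ?_) measurableSet_Ioi
    rw [min_eq_left (by nlinarith), one_div_mul_eq_div, ← rpow_sub_natCast (by positivity),
      show 1 - α - ((2 : ℕ) : ℝ) = -1 - α by push_cast; ring]

lemma integrableOn_poissonTailTwo_div_sq_mul_rpow (hα1 : 1 < α) (hα2 : α < 2) :
    IntegrableOn (fun y : ℝ => poissonTailTwo y / y ^ 2 * y ^ (1 - α)) (Ioi 0) := by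
  refine (integrableOn_min_one_sq_div_sq_mul_rpow hα1 hα2).mono' ?_ ?_
  · refine ContinuousOn.aestronglyMeasurable ?_ measurableSet_Ioi
    intro y (hy : 0 < y)
    have hy0 : y ≠ 0 := hy.ne'
    unfold poissonTailTwo
    exact ContinuousAt.continuousWithinAt (by fun_prop (disch := simp [hy0]))
  · filter_upwards [ae_restrict_mem measurableSet_Ioi] with y (hy : 0 < y)
    rw [norm_of_nonneg (by have := poissonTailTwo_pos hy; positivity)]
    gcongr
    exact poissonTailTwo_le_min hy.le

lemma setIntegral_poissonTailTwo_div_sq_mul_rpow_pos (hα1 : 1 < α) (hα2 : α < 2) :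
    0 < ∫ y in Ioi 0, poissonTailTwo y / y ^ 2 * y ^ (1 - α) := by
  have hpos : ∀ y ∈ Ioi (0 : ℝ), 0 < poissonTailTwo y / y ^ 2 * y ^ (1 - α) := fun y hy => by
    have := poissonTailTwo_pos hy
    have : (0 : ℝ) < y := hy
    positivity
  rw [setIntegral_pos_iff_support_of_nonneg_ae
    ((ae_restrict_mem measurableSet_Ioi).mono fun y hy => (hpos y hy).le)
    (integrableOn_poissonTailTwo_div_sq_mul_rpow hα1 hα2)]
  refine lt_of_lt_of_le ?_ (measure_mono fun y hy => ⟨(hpos y hy).ne', hy⟩)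
  simp

lemma tendsto_setIntegral_binomTailTwo_div (hα1 : 1 < α) (hα2 : α < 2) :
    Tendsto (fun n : ℕ => ∫ y in Ioc 0 (n : ℝ), binomTailTwo n (y / n) / y ^ 2 * y ^ (1 - α))
      atTop (𝓝 (∫ y in Ioi 0, poissonTailTwo y / y ^ 2 * y ^ (1 - α))) := by
  set F : ℕ → ℝ → ℝ := fun n y => binomTailTwo n (y / n) / y ^ 2 * y ^ (1 - α)
  have hF_meas : ∀ n, AEStronglyMeasurable (F n) (volume.restrict (Ioi 0)) := fun n => by
    refine ContinuousOn.aestronglyMeasurable (fun y (hy : 0 < y) => ?_) measurableSet_Ioi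
    have hy0 : y ≠ 0 := hy.ne'
    have hP := (continuous_binomTailTwo n).continuousAt (x := y / n)
    exact ContinuousAt.continuousWithinAt (by fun_prop (disch := simp [hy0]))
  have hdct := tendsto_integral_of_dominated_convergence
    (μ := volume.restrict (Ioi 0)) (F := fun n => (Ioc 0 (n : ℝ)).indicator (F n))
    (f := fun y => poissonTailTwo y / y ^ 2 * y ^ (1 - α))
    (fun y => min 1 (y ^ 2) / y ^ 2 * y ^ (1 - α))
    (fun n => (hF_meas n).indicator measurableSet_Ioc)
    (integrableOn_min_one_sq_div_sq_mul_rpow hα1 hα2) ?bound ?lim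
  case bound =>
    intro n
    filter_upwards [ae_restrict_mem measurableSet_Ioi] with y (hy : 0 < y)
    by_cases hyn : y ∈ Ioc 0 (n : ℝ)
    · have hn0 : (0 : ℝ) < n := hy.trans_le hyn.2
      have hx0 : 0 ≤ y / n := by positivity
      have hx1 : y / n ≤ 1 := (div_le_one hn0).mpr hyn.2
      have hP := binomTailTwo_le_sq n hx0 hx1
      rw [mul_div_cancel₀ _ hn0.ne'] at hP
      rw [indicator_of_mem hyn, norm_of_nonneg (by have := binomTailTwo_nonneg n hx1; positivity)]
      show binomTailTwo n (y / n) / y ^ 2 * y ^ (1 - α) ≤ _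
      gcongr
      exact le_min (binomTailTwo_le_one n hx0 hx1) hP
    · rw [indicator_of_notMem hyn, norm_zero]
      positivity
  case lim =>
    filter_upwards [ae_restrict_mem measurableSet_Ioi] with y (hy : 0 < y)
    refine (((tendsto_binomTailTwo_div y).div_const _).mul_const _).congr' ?_
    filter_upwards [eventually_ge_atTop ⌈y⌉₊] with n hn
    have hyn : y ∈ Ioc 0 (n : ℝ) := ⟨hy, (Nat.le_ceil y).trans (by exact_mod_cast hn)⟩
    rw [indicator_of_mem hyn]
  refine hdct.congr fun n => ?_
  rw [integral_indicator measurableSet_Ioc, Measure.restrict_restrict measurableSet_Ioc,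
    inter_eq_left.mpr Ioc_subset_Ioi_self]

lemma isEquivalent_setIntegral_binomTailTwo (B : ℝ) (hα1 : 1 < α) (hα2 : α < 2) :
    (fun n : ℕ => ∫ x in Ioc 0 1, binomTailTwo n x / x ^ 2 * (B * x ^ (1 - α))) ~[atTop]
      fun n => B * (∫ y in Ioi 0, poissonTailTwo y / y ^ 2 * y ^ (1 - α)) * (n : ℝ) ^ α := by
  have hc := setIntegral_poissonTailTwo_div_sq_mul_rpow_pos hα1 hα2
  have hJ := (isEquivalent_const_iff_tendsto hc.ne').mpr
    (tendsto_setIntegral_binomTailTwo_div hα1 hα2)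
  have hequiv := (IsEquivalent.refl (u := fun _ : ℕ => B)).mul
    (hJ.mul (IsEquivalent.refl (u := fun n : ℕ => (n : ℝ) ^ α)))
  refine (hequiv.congr_left ?_).congr_right (Eventually.of_forall fun n => (mul_assoc _ _ _).symm)
  filter_upwards [eventually_ne_atTop 0] with n hn
  simp only [Pi.mul_apply]
  rw [mul_comm (∫ _ in _, _), ← setIntegral_div_sq_mul_rpow_eq α _ hn, ← integral_const_mul]
  simp only [mul_left_comm B]

end Integrals

theorem isEquivalent_setIntegral_mul_of_tendsto_div {ι : Type*} {l : Filter ι}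
    {K : ι → ℝ → ℝ} {g w : ℝ → ℝ} {a : ℝ}
    (hK_meas : ∀ i, AEStronglyMeasurable (K i) (volume.restrict (Ioc 0 a)))
    (hK_nonneg : ∀ i, ∀ x ∈ Ioc 0 a, 0 ≤ K i x)
    (hK_bdd : ∀ i, ∃ C, ∀ x ∈ Ioc 0 a, K i x ≤ C)
    (hK_bdd_away : ∀ t > 0, ∃ C, ∀ i, ∀ x ∈ Ioc t a, K i x ≤ C)
    (hg : IntegrableOn g (Ioc 0 a)) (hw : IntegrableOn w (Ioc 0 a))
    (hw_pos : ∀ x ∈ Ioc 0 a, 0 < w x)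
    (hgw : Tendsto (fun x => g x / w x) (𝓝[>] 0) (𝓝 1))
    (hKw : Tendsto (fun i => ∫ x in Ioc 0 a, K i x * w x) l atTop) :
    (fun i => ∫ x in Ioc 0 a, K i x * g x) ~[l] fun i => ∫ x in Ioc 0 a, K i x * w x := by
  have hK_mul : ∀ i {f : ℝ → ℝ}, IntegrableOn f (Ioc 0 a) →
      IntegrableOn (fun x => K i x * f x) (Ioc 0 a) := fun i f hf => by
    obtain ⟨C, hC⟩ := hK_bdd i
    refine hf.bdd_mul (c := C) (hK_meas i) ?_
    filter_upwards [ae_restrict_mem measurableSet_Ioc] with x hx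
    rw [norm_of_nonneg (hK_nonneg i x hx)]
    exact hC x hx
  refine IsLittleO.isEquivalent (isLittleO_iff.mpr fun c hc => ?_)
  obtain ⟨t, ht : 0 < t, hclose⟩ := mem_nhdsGT_iff_exists_Ioo_subset.mp
    (hgw (Metric.ball_mem_nhds 1 (half_pos hc)))
  obtain ⟨C, hC⟩ := hK_bdd_away (t / 2) (half_pos ht)
  -- Near `0` the relative error of `g` is below `c / 2`; away from `0` the kernel is bounded.
  have hpt : ∀ i, ∀ x ∈ Ioc 0 a,
      |K i x * (g x - w x)| ≤ c / 2 * (K i x * w x) + max C 0 * |g x - w x| := by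
    intro i x hx
    have hKx := hK_nonneg i x hx
    have hwx := hw_pos x hx
    rw [abs_mul, abs_of_nonneg hKx]
    by_cases hxt : x ≤ t / 2
    · have hrel : |g x / w x - 1| < c / 2 := hclose ⟨hx.1, by linarith [half_lt_self ht]⟩
      have : |g x - w x| ≤ c / 2 * w x := by
        rw [show g x - w x = (g x / w x - 1) * w x by field_simp, abs_mul, abs_of_pos hwx]
        exact mul_le_mul_of_nonneg_right hrel.le hwx.le
      nlinarith [abs_nonneg (g x - w x), le_max_right C 0]
    · have hKC : K i x ≤ max C 0 := (hC i x ⟨not_le.mp hxt, hx.2⟩).trans (le_max_left _ _)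
      nlinarith [abs_nonneg (g x - w x), mul_nonneg hKx hwx.le]
  have hbound : ∀ i, ‖(∫ x in Ioc 0 a, K i x * g x) - ∫ x in Ioc 0 a, K i x * w x‖ ≤
      c / 2 * (∫ x in Ioc 0 a, K i x * w x) + max C 0 * ∫ x in Ioc 0 a, |g x - w x| := by
    intro i
    have hdiff : IntegrableOn (fun x => K i x * (g x - w x)) (Ioc 0 a) := hK_mul i (hg.sub hw)
    have habs : IntegrableOn (fun x => |g x - w x|) (Ioc 0 a) := (hg.sub hw).abs
    calc ‖(∫ x in Ioc 0 a, K i x * g x) - ∫ x in Ioc 0 a, K i x * w x‖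
        = ‖∫ x in Ioc 0 a, K i x * (g x - w x)‖ := by
          rw [← integral_sub (hK_mul i hg) (hK_mul i hw)]
          simp_rw [mul_sub]
      _ ≤ ∫ x in Ioc 0 a, ‖K i x * (g x - w x)‖ := norm_integral_le_integral_norm _
      _ ≤ ∫ x in Ioc 0 a, (c / 2 * (K i x * w x) + max C 0 * |g x - w x|) := by
          refine setIntegral_mono_on ?_ (((hK_mul i hw).const_mul _).add (habs.const_mul _))
            measurableSet_Ioc (hpt i)
          exact hdiff.norm
      _ = c / 2 * (∫ x in Ioc 0 a, K i x * w x) + max C 0 * ∫ x in Ioc 0 a, |g x - w x| := by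
          rw [integral_add ((hK_mul i hw).const_mul _) (habs.const_mul _),
            integral_const_mul, integral_const_mul]
  have hM : 0 ≤ max C 0 * ∫ x in Ioc 0 a, |g x - w x| :=
    mul_nonneg (le_max_right _ _) (setIntegral_nonneg measurableSet_Ioc fun x _ => abs_nonneg _)
  filter_upwards [hKw.eventually_ge_atTop (2 / c * (max C 0 * ∫ x in Ioc 0 a, |g x - w x|))]
    with i hi
  have hV : 0 ≤ ∫ x in Ioc 0 a, K i x * w x := (by positivity : 0 ≤ 2 / c * _).trans hi
  rw [Pi.sub_apply, Real.norm_of_nonneg hV]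
  refine (hbound i).trans ?_
  rw [div_mul_eq_mul_div, div_le_iff₀ hc] at hi
  linarith

theorem stmt8_general (B α : ℝ) (hB : 0 < B) (hα1 : 1 < α) (hα2 : α < 2)
    (g : ℝ → ℝ)
    (hgint : IntegrableOn g (Set.Ioc 0 1))
    (hasymp : Tendsto (fun x => g x / (B * x ^ (1 - α)))
      (nhdsWithin 0 (Set.Ioi 0)) (nhds 1)) :
    ∃ c > (0 : ℝ),
      Tendsto (fun n : ℕ =>
          (∫ x in Set.Ioc (0 : ℝ) 1,
            (1 - (1 - x) ^ n - n * x * (1 - x) ^ (n - 1)) / x ^ 2 * g x)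
          / (c * (n : ℝ) ^ α))
        atTop (nhds 1) := by
  set c₀ := ∫ y in Ioi 0, poissonTailTwo y / y ^ 2 * y ^ (1 - α)
  have hc₀ : 0 < c₀ := setIntegral_poissonTailTwo_div_sq_mul_rpow_pos hα1 hα2
  have hmain := isEquivalent_setIntegral_binomTailTwo B hα1 hα2
  have hK_meas : ∀ n, AEStronglyMeasurable (fun x => binomTailTwo n x / x ^ 2)
      (volume.restrict (Ioc 0 1)) := fun n =>
    ((continuous_binomTailTwo n).measurable.div (continuous_pow 2).measurable).aestronglyMeasurable
  have hw_int : IntegrableOn (fun x : ℝ => B * x ^ (1 - α)) (Ioc 0 1) :=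
    (intervalIntegral.intervalIntegrable_rpow' (by linarith)).1.const_mul B
  have hw_tendsto : Tendsto (fun n : ℕ => B * c₀ * (n : ℝ) ^ α) atTop atTop :=
    ((tendsto_rpow_atTop (by linarith)).comp tendsto_natCast_atTop_atTop).const_mul_atTop
      (mul_pos hB hc₀)
  have hrate := isEquivalent_setIntegral_mul_of_tendsto_div hK_meas
    (fun n x hx => div_nonneg (binomTailTwo_nonneg n hx.2) (sq_nonneg x))
    (fun n => ⟨_, fun x hx => binomTailTwo_div_sq_le_natCast_sq n hx⟩)
    (fun t ht => ⟨_, fun n x hx => binomTailTwo_div_sq_le_inv_sq n ht hx⟩)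
    hgint hw_int (fun x hx => mul_pos hB (rpow_pos_of_pos hx.1 _)) hasymp
    (hmain.symm.tendsto_atTop hw_tendsto)
  refine ⟨B * c₀, mul_pos hB hc₀, (isEquivalent_iff_tendsto_one ?_).mp (hrate.trans hmain)⟩
  filter_upwards [eventually_ne_atTop 0] with n hn
  have : (0 : ℝ) < n := by positivity
  positivity

/-- for the Λ-coalescent with `Λ(dx) = g(x)dx` where
`g(x) ~ B x^{1−α}` as `x → 0+` (`B > 0`, `α ∈ (1,2)`), the total coalescence
rate `λ_n = ∫_0^1 x^{−2}(1 − (1−x)^n − nx(1−x)^{n−1}) g(x) dx` satisfies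
`λ_n ~ c n^α` for some constant `c > 0`. -/
theorem stmt8 (B α : ℝ) (hB : 0 < B) (hα1 : 1 < α) (hα2 : α < 2)
    (g : ℝ → ℝ) (hgmeas : Measurable g)
    (hgnn : ∀ x ∈ Set.Ioc (0 : ℝ) 1, 0 ≤ g x)
    (hgint : IntegrableOn g (Set.Ioc 0 1))
    (hasymp : Tendsto (fun x => g x / (B * x ^ (1 - α)))
      (nhdsWithin 0 (Set.Ioi 0)) (nhds 1)) :
    ∃ c > (0 : ℝ),
      Tendsto (fun n : ℕ =>
          (∫ x in Set.Ioc (0 : ℝ) 1,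
            (1 - (1 - x) ^ n - n * x * (1 - x) ^ (n - 1)) / x ^ 2 * g x)
          / (c * (n : ℝ) ^ α))
        atTop (nhds 1) :=
  stmt8_general B α hB hα1 hα2 g hgint hasymp
end

section
/- Fix c₁ > 0 and define a sequence by u_{k+1} = u_k + c₁ u_k / log(u_k), with u_0 > e. Then there exist constants 0 < a < A (depending on c₁ and u_0) such that for all sufficiently large k, a·exp(√(2c₁k)) ≤ u_k ≤ A·exp(√(2c₁k + C)) for some constant C; in particular log(u_k) ~ √(2c₁ k) as k → ∞. -/
/-!
With `L = log u` the recursion reads `L (k + 1) = L k + log (1 + c₁ / L k)`, a discretisation of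
`L' = c₁ / L`, i.e. of `(L ^ 2)' = 2 c₁`. The bounds `2x / (x + 2) ≤ log (1 + x) ≤ x` show that one
step raises `(L + c₁/2) ^ 2` by at least `2 c₁` and `(L - c₁/2) ^ 2` by at most `2 c₁` (the latter
once `L ≥ c₁/2`, which holds eventually). Hence
`√(2 c₁ k) - c₁/2 ≤ L k ≤ c₁/2 + √(2 c₁ k + C)` for large `k`.
-/

open Filter Real Asymptotics Topology

lemma Real.sqrt_add_le_add_sqrt {x y : ℝ} (hx : 0 ≤ x) (hy : 0 ≤ y) : √(x + y) ≤ √x + √y := by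
  rw [sqrt_le_left (by positivity)]
  nlinarith [sq_sqrt hx, sq_sqrt hy, sqrt_nonneg x, sqrt_nonneg y]

lemma tendsto_div_nhds_one_of_abs_sub_le {α : Type*} {l : Filter α} {f g : α → ℝ} {D : ℝ}
    (hg : Tendsto g l atTop) (hfg : ∀ᶠ x in l, |f x - g x| ≤ D) :
    Tendsto (fun x => f x / g x) l (𝓝 1) := by
  have hbdd : (f - g) =O[l] (fun _ => (1 : ℝ)) :=
    IsBigO.of_bound D (hfg.mono fun x hx => by simpa using hx)
  have hequiv : f ~[l] g :=
    hbdd.trans_isLittleO ((isLittleO_one_left_iff ℝ).2 (tendsto_norm_atTop_atTop.comp hg))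
  exact (isEquivalent_iff_tendsto_one (hg.eventually_ne_atTop 0)).1 hequiv

lemma tendsto_sqrt_mul_natCast_atTop {c : ℝ} (hc : 0 < c) :
    Tendsto (fun k : ℕ => √(c * k)) atTop atTop :=
  tendsto_sqrt_atTop.comp (tendsto_natCast_atTop_atTop.const_mul_atTop hc)

section SquareIncrements

variable {c : ℝ}

lemma sq_add_two_mul_le_sq_of_add_div_le {x y : ℝ} (hc : 0 ≤ c) (hx : 0 < x)
    (hxy : x + c / x ≤ y) : x ^ 2 + 2 * c ≤ y ^ 2 := by
  have hcx : c / x * x = c := div_mul_cancel₀ c hx.ne'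
  have hsq : (x + c / x) ^ 2 ≤ y ^ 2 := pow_le_pow_left₀ (by positivity) hxy 2
  nlinarith [sq_nonneg (c / x)]

lemma sq_sub_half_le_of_le_add_div {x y : ℝ} (hx : 1 ≤ x) (hy : c / 2 ≤ y)
    (hxy : y ≤ x + c / x) : (y - c / 2) ^ 2 ≤ (x - c / 2) ^ 2 + 2 * c := by
  have hcx : c / x * x = c := div_mul_cancel₀ c (by positivity)
  have hsq : (y - c / 2) ^ 2 ≤ (x + c / x - c / 2) ^ 2 :=
    pow_le_pow_left₀ (by linarith) (by linarith) 2
  -- `(x + c/x - c/2)² = (x - c/2)² + 2c - c²/x + (c/x)²`, and `(c/x)² ≤ c²/x` as `x ≥ 1`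
  nlinarith [mul_le_mul_of_nonneg_left hx (sq_nonneg (c / x))]

variable {x : ℕ → ℝ}

lemma sq_add_two_mul_mul_le_sq_of_add_div_le_succ (hc : 0 ≤ c) (hx : ∀ k, 0 < x k)
    (hstep : ∀ k, x k + c / x k ≤ x (k + 1)) (k : ℕ) : x 0 ^ 2 + 2 * c * k ≤ x k ^ 2 := by
  induction k with
  | zero => simp
  | succ k ih =>
    have := sq_add_two_mul_le_sq_of_add_div_le hc (hx k) (hstep k)
    push_cast
    linarith

lemma sq_sub_half_le_add_two_mul_mul_of_succ_le_add_div (hx : ∀ k, 1 ≤ x k)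
    (hx' : ∀ k, c / 2 ≤ x k) (hstep : ∀ k, x (k + 1) ≤ x k + c / x k) (k : ℕ) :
    (x k - c / 2) ^ 2 ≤ (x 0 - c / 2) ^ 2 + 2 * c * k := by
  induction k with
  | zero => simp
  | succ k ih =>
    have := sq_sub_half_le_of_le_add_div (hx k) (hx' (k + 1)) (hstep k)
    push_cast
    linarith

end SquareIncrements

section LogRecursion

variable {c : ℝ} {L : ℕ → ℝ}

lemma log_add_mul_div_log {x : ℝ} (hc : 0 ≤ c) (hx : 0 < x) (hlog : 0 < log x) :
    log (x + c * x / log x) = log x + log (1 + c / log x) := by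
  rw [← log_mul hx.ne' (by positivity)]
  congr 1
  field_simp

lemma exp_one_lt_of_recursion (hc : 0 < c) {u : ℕ → ℝ} (hu0 : exp 1 < u 0)
    (hrec : ∀ k, u (k + 1) = u k + c * u k / log (u k)) (k : ℕ) : exp 1 < u k := by
  induction k with
  | zero => exact hu0
  | succ k ih =>
    have hu : 0 < u k := (exp_pos 1).trans ih
    have hlog : 1 < log (u k) := (lt_log_iff_exp_lt hu).2 ih
    have : 0 < c * u k / log (u k) := div_pos (mul_pos hc hu) (by linarith)
    rw [hrec k]
    linarith

lemma sqrt_sub_half_le_of_log_recursion (hc : 0 ≤ c) (hL : ∀ k, 1 < L k)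
    (hrec : ∀ k, L (k + 1) = L k + log (1 + c / L k)) (k : ℕ) : √(2 * c * k) - c / 2 ≤ L k := by
  have hpos : ∀ k, 0 < L k + c / 2 := fun k => by linarith [hL k]
  have hstep : ∀ k, L k + c / 2 + c / (L k + c / 2) ≤ L (k + 1) + c / 2 := by
    intro k
    have hLk : 0 < L k := by linarith [hL k]
    have hlog := le_log_one_add_of_nonneg (div_nonneg hc hLk.le)
    have heq : 2 * (c / L k) / (c / L k + 2) = c / (L k + c / 2) := by
      field_simp
      ring
    rw [hrec k]
    linarith
  have hsq := sq_add_two_mul_mul_le_sq_of_add_div_le_succ hc hpos hstep k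
  have : √(2 * c * k) ≤ L k + c / 2 := by
    rw [sqrt_le_left (hpos k).le]
    nlinarith [sq_nonneg (L 0 + c / 2)]
  linarith

lemma exists_le_half_add_sqrt_of_log_recursion (hc : 0 < c) (hL : ∀ k, 1 < L k)
    (hrec : ∀ k, L (k + 1) = L k + log (1 + c / L k)) :
    ∃ C, 0 ≤ C ∧ ∀ᶠ k : ℕ in atTop, L k ≤ c / 2 + √(2 * c * k + C) := by
  have hLtop : Tendsto L atTop atTop :=
    tendsto_atTop_mono (sqrt_sub_half_le_of_log_recursion hc.le hL hrec)
      (tendsto_atTop_add_const_right _ _ (tendsto_sqrt_mul_natCast_atTop (by positivity)))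
  obtain ⟨N, hN⟩ := eventually_atTop.1 (hLtop.eventually_ge_atTop (c / 2))
  refine ⟨(L N - c / 2) ^ 2, sq_nonneg _, ?_⟩
  filter_upwards [eventually_ge_atTop N] with k hk
  obtain ⟨j, rfl⟩ := Nat.exists_eq_add_of_le hk
  have hstep : ∀ i, L (N + (i + 1)) ≤ L (N + i) + c / L (N + i) := by
    intro i
    have hLi : 0 < L (N + i) := by linarith [hL (N + i)]
    have := log_le_sub_one_of_pos (show 0 < 1 + c / L (N + i) by positivity)
    rw [← add_assoc, hrec]
    linarith
  have hsq := sq_sub_half_le_add_two_mul_mul_of_succ_le_add_div (x := fun i => L (N + i))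
    (fun i => (hL _).le) (fun i => hN _ (by omega)) hstep j
  have hsq' : (L (N + j) - c / 2) ^ 2 ≤ 2 * c * ↑(N + j) + (L N - c / 2) ^ 2 := by
    simp only [add_zero] at hsq
    push_cast
    nlinarith [(Nat.cast_nonneg N : (0 : ℝ) ≤ N)]
  linarith [le_sqrt_of_sq_le hsq']

end LogRecursion

/-- growth of the recursion `u_{k+1} = u_k + c₁ u_k / log u_k`
with `u_0 > e`: there are constants `0 < a < A` and `C ≥ 0` such that eventually
`a·exp(√(2c₁k)) ≤ u_k ≤ A·exp(√(2c₁k + C))`; in particular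
`log u_k ~ √(2c₁k)` as `k → ∞`. -/
theorem stmt16 (c₁ : ℝ) (hc₁ : 0 < c₁) (u : ℕ → ℝ) (hu0 : Real.exp 1 < u 0)
    (hrec : ∀ k : ℕ, u (k + 1) = u k + c₁ * u k / Real.log (u k)) :
    ∃ a A C : ℝ, 0 < a ∧ a < A ∧ 0 ≤ C ∧
      (∀ᶠ k : ℕ in atTop,
        a * Real.exp (Real.sqrt (2 * c₁ * k)) ≤ u k ∧
        u k ≤ A * Real.exp (Real.sqrt (2 * c₁ * k + C))) ∧
      Tendsto (fun k : ℕ => Real.log (u k) / Real.sqrt (2 * c₁ * k)) atTop (nhds 1) := by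
  have he := exp_one_lt_of_recursion hc₁ hu0 hrec
  have hupos : ∀ k, 0 < u k := fun k => (exp_pos 1).trans (he k)
  have hL : ∀ k, 1 < log (u k) := fun k => (lt_log_iff_exp_lt (hupos k)).2 (he k)
  have hLrec : ∀ k, log (u (k + 1)) = log (u k) + log (1 + c₁ / log (u k)) := fun k => by
    rw [hrec, log_add_mul_div_log hc₁.le (hupos k) (by linarith [hL k])]
  have hlow := sqrt_sub_half_le_of_log_recursion hc₁.le hL hLrec
  obtain ⟨C, hC, hup⟩ := exists_le_half_add_sqrt_of_log_recursion hc₁ hL hLrec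
  refine ⟨exp (-(c₁ / 2)), exp (c₁ / 2), C, exp_pos _, exp_lt_exp.2 (by linarith), hC, ?_, ?_⟩
  · filter_upwards [hup] with k hk
    rw [← exp_add, ← exp_add, ← exp_log (hupos k), exp_le_exp, exp_le_exp]
    constructor <;> linarith [hlow k]
  · refine tendsto_div_nhds_one_of_abs_sub_le (D := c₁ / 2 + √C)
      (tendsto_sqrt_mul_natCast_atTop (by positivity)) ?_
    filter_upwards [hup] with k hk
    have := sqrt_add_le_add_sqrt (by positivity : (0 : ℝ) ≤ 2 * c₁ * k) hC
    rw [abs_sub_le_iff]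
    constructor <;> linarith [hlow k, sqrt_nonneg C]
end

section
/- Consider a pure death chain (Q_t) on the nonnegative integers where the jump rate from i to i−1 is at least c·|A|^{1−α}·i^α for constants c > 0, α > 1 and a parameter |A| ≥ 1. Then for K with Σ_{k>K} (c|A|^{1−α}k^α)^{−1} < t₀/2, one has P(Q_{t₀} > K starting from any initial state) ≤ exp(−c₃K) for some c₃ > 0 depending on c, α; in particular, taking K = C t₀^{−1/(α−1)} |A| for C large (depending on c, α) gives P(Q_{t₀} > C t₀^{−1/(α−1)}|A|) ≤ exp(−c' |A|) whenever t₀ ≤ 1. -/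
open MeasureTheory ProbabilityTheory Real

/-!
Started above `K`, the chain is still above `K` at time `t₀` only if the holding times at
`K + 1, …, q₀` add up to more than `t₀`. These are independent with exponential tails of rates
`λ_k = a k^α ≥ λ_K` (here `a = c A^{1-α}`) and `∑_{k>K} 1/λ_k ≤ t₀/2`, so the Chernoff bound at
`θ = λ_K / 4`, with `(1 - x)⁻¹ ≤ e^{3x/2}` for the moment generating functions, bounds the
probability by `exp (-λ_K t₀ / 16)`; the `K` terms `K < k ≤ 2K` of the sum alone force
`λ_K t₀ ≥ 2^{1-α} K`. For the second claim, comparison with `∫_K^∞ x^{-α} dx` gives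
`∑_{k>K} 1/λ_k ≤ A^{α-1} K^{1-α} / (c (α-1))`, which is below `t₀/2` as soon as
`K ≥ C t₀^{-1/(α-1)} A` with `C^{α-1} > 2 / (c (α-1))`; such `K` are at least `A`.
-/

lemma integral_mul_exp_mul (θ x : ℝ) : ∫ t in (0 : ℝ)..x, θ * exp (θ * t) = exp (θ * x) - 1 := by
  rcases eq_or_ne θ 0 with rfl | hθ
  · simp
  rw [intervalIntegral.integral_const_mul, intervalIntegral.integral_comp_mul_left exp hθ,
    integral_exp, smul_eq_mul, mul_zero, exp_zero, mul_inv_cancel_left₀ hθ]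

lemma lintegral_mul_exp_neg_mul_Ioi {θ b : ℝ} (hθ : 0 ≤ θ) (hb : 0 < b) :
    ∫⁻ t in Set.Ioi (0 : ℝ), ENNReal.ofReal (θ * exp (-b * t)) = ENNReal.ofReal (θ / b) := by
  rw [← ofReal_integral_eq_lintegral_ofReal, integral_const_mul,
    integral_exp_mul_Ioi (by linarith), mul_zero, exp_zero, div_neg, neg_div, neg_neg, mul_one_div]
  · exact (exp_neg_integrableOn_Ioi 0 hb).const_mul θ
  · exact Filter.Eventually.of_forall fun t => mul_nonneg hθ (exp_pos _).le

section ExponentialTail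

variable {Ω : Type*} {m : MeasurableSpace Ω} {μ : Measure Ω} {X : Ω → ℝ} {lam θ : ℝ}

lemma lintegral_exp_mul_le_of_tail_le_exp [IsProbabilityMeasure μ] (hXm : Measurable X)
    (hX0 : ∀ ω, 0 ≤ X ω) (hθ : 0 < θ) (hθlam : θ < lam)
    (htail : ∀ s, 0 ≤ s → μ {ω | s < X ω} ≤ ENNReal.ofReal (exp (-lam * s))) :
    ∫⁻ ω, ENNReal.ofReal (exp (θ * X ω)) ∂μ ≤ ENNReal.ofReal (lam / (lam - θ)) := by
  -- layer cake: `E[e^{θX}] = 1 + ∫₀^∞ θ e^{θt} P(X > t) dt`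
  have hsplit : ∀ ω, ENNReal.ofReal (exp (θ * X ω))
      = ENNReal.ofReal (∫ t in (0 : ℝ)..X ω, θ * exp (θ * t)) + 1 := fun ω => by
    rw [integral_mul_exp_mul, ← ENNReal.ofReal_one, ← ENNReal.ofReal_add _ zero_le_one,
      sub_add_cancel]
    linarith [one_le_exp (mul_nonneg hθ.le (hX0 ω))]
  have hlayer := lintegral_comp_eq_lintegral_meas_lt_mul μ (Filter.Eventually.of_forall hX0)
    hXm.aemeasurable
    (fun t _ => (by fun_prop : Continuous fun t => θ * exp (θ * t)).intervalIntegrable 0 t)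
    (Filter.Eventually.of_forall fun t => by positivity)
  have hbound : ∫⁻ t in Set.Ioi (0 : ℝ), μ {ω | t < X ω} * ENNReal.ofReal (θ * exp (θ * t))
      ≤ ∫⁻ t in Set.Ioi (0 : ℝ), ENNReal.ofReal (θ * exp (-(lam - θ) * t)) := by
    refine setLIntegral_mono' measurableSet_Ioi fun t ht => ?_
    calc μ {ω | t < X ω} * ENNReal.ofReal (θ * exp (θ * t))
        ≤ ENNReal.ofReal (exp (-lam * t)) * ENNReal.ofReal (θ * exp (θ * t)) := by
          gcongr; exact htail t (le_of_lt ht)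
      _ = ENNReal.ofReal (θ * exp (-(lam - θ) * t)) := by
          rw [← ENNReal.ofReal_mul (exp_pos _).le, mul_left_comm, ← exp_add]
          ring_nf
  calc ∫⁻ ω, ENNReal.ofReal (exp (θ * X ω)) ∂μ
      = (∫⁻ t in Set.Ioi (0 : ℝ), μ {ω | t < X ω} * ENNReal.ofReal (θ * exp (θ * t))) + 1 := by
        simp_rw [hsplit]
        rw [lintegral_add_right _ measurable_const, hlayer, lintegral_const, measure_univ, one_mul]
    _ ≤ ENNReal.ofReal (θ / (lam - θ)) + ENNReal.ofReal 1 := by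
        rw [ENNReal.ofReal_one, ← lintegral_mul_exp_neg_mul_Ioi hθ.le (sub_pos.2 hθlam)]
        gcongr
    _ = ENNReal.ofReal (lam / (lam - θ)) := by
        rw [← ENNReal.ofReal_add (div_nonneg hθ.le (by linarith)) zero_le_one]
        have := (sub_pos.2 hθlam).ne'
        congr 1
        field_simp
        ring

lemma integrable_exp_mul_of_tail_le_exp [IsProbabilityMeasure μ] (hXm : Measurable X)
    (hX0 : ∀ ω, 0 ≤ X ω) (hθ : 0 < θ) (hθlam : θ < lam)
    (htail : ∀ s, 0 ≤ s → μ {ω | s < X ω} ≤ ENNReal.ofReal (exp (-lam * s))) :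
    Integrable (fun ω => exp (θ * X ω)) μ := by
  refine ⟨by fun_prop, ?_⟩
  rw [hasFiniteIntegral_iff_ofReal (Filter.Eventually.of_forall fun ω => (exp_pos _).le)]
  exact (lintegral_exp_mul_le_of_tail_le_exp hXm hX0 hθ hθlam htail).trans_lt
    ENNReal.ofReal_lt_top

lemma mgf_le_of_tail_le_exp [IsProbabilityMeasure μ] (hXm : Measurable X)
    (hX0 : ∀ ω, 0 ≤ X ω) (hθ : 0 < θ) (hθlam : θ < lam)
    (htail : ∀ s, 0 ≤ s → μ {ω | s < X ω} ≤ ENNReal.ofReal (exp (-lam * s))) :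
    mgf X μ θ ≤ lam / (lam - θ) := by
  rw [mgf, integral_eq_lintegral_of_nonneg_ae
    (Filter.Eventually.of_forall fun ω => (exp_pos _).le) (by fun_prop)]
  exact ENNReal.toReal_le_of_le_ofReal (div_nonneg (by linarith) (by linarith))
    (lintegral_exp_mul_le_of_tail_le_exp hXm hX0 hθ hθlam htail)

end ExponentialTail

lemma inv_one_sub_le_exp {x : ℝ} (hx0 : 0 ≤ x) (hx : x ≤ 1 / 4) :
    (1 - x)⁻¹ ≤ exp (3 / 2 * x) := by
  rw [inv_le_iff_one_le_mul₀ (by linarith)]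
  nlinarith [add_one_le_exp (3 / 2 * x)]

theorem measure_le_sum_le_exp_of_tail_le_exp {Ω ι : Type*} {m : MeasurableSpace Ω}
    {μ : Measure Ω} [IsProbabilityMeasure μ] {X : ι → Ω → ℝ} (hXm : ∀ i, Measurable (X i))
    (hind : iIndepFun X μ) {s : Finset ι} (hX0 : ∀ i ∈ s, ∀ ω, 0 ≤ X i ω) {lam : ι → ℝ}
    {θ t : ℝ} (hθ : 0 < θ) (hθlam : ∀ i ∈ s, 4 * θ ≤ lam i)
    (htail : ∀ i ∈ s, ∀ r, 0 ≤ r → μ {ω | r < X i ω} ≤ ENNReal.ofReal (exp (-lam i * r)))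
    (hsum : ∑ i ∈ s, (lam i)⁻¹ ≤ t / 2) :
    μ {ω | t ≤ ∑ i ∈ s, X i ω} ≤ ENNReal.ofReal (exp (-(θ * t / 4))) := by
  have hθlt : ∀ i ∈ s, θ < lam i := fun i hi => by linarith [hθlam i hi]
  have hmgf : ∀ i ∈ s, mgf (X i) μ θ ≤ exp (3 / 2 * (θ * (lam i)⁻¹)) := fun i hi => by
    have hlam : 0 < lam i := hθ.trans (hθlt i hi)
    calc mgf (X i) μ θ ≤ lam i / (lam i - θ) :=
          mgf_le_of_tail_le_exp (hXm i) (hX0 i hi) hθ (hθlt i hi) (htail i hi)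
      _ = (1 - θ * (lam i)⁻¹)⁻¹ := by field_simp
      _ ≤ exp (3 / 2 * (θ * (lam i)⁻¹)) := by
          refine inv_one_sub_le_exp (by positivity) ?_
          rw [← div_eq_mul_inv, div_le_iff₀ hlam]
          linarith [hθlam i hi]
  have hint : Integrable (fun ω => exp (θ * (∑ i ∈ s, X i) ω)) μ :=
    hind.integrable_exp_mul_sum hXm fun i hi =>
      integrable_exp_mul_of_tail_le_exp (hXm i) (hX0 i hi) hθ (hθlt i hi) (htail i hi)
  have hchernoff : μ.real {ω | t ≤ ∑ i ∈ s, X i ω} ≤ exp (-(θ * t / 4)) := by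
    calc μ.real {ω | t ≤ ∑ i ∈ s, X i ω}
        ≤ exp (-θ * t) * ∏ i ∈ s, mgf (X i) μ θ := by
          simpa only [Finset.sum_apply, hind.mgf_sum hXm] using
            measure_ge_le_exp_mul_mgf t hθ.le hint
      _ ≤ exp (-θ * t) * ∏ i ∈ s, exp (3 / 2 * (θ * (lam i)⁻¹)) := by
          gcongr with i hi
          · exact fun i _ => mgf_nonneg
          · exact hmgf i hi
      _ = exp (-θ * t + 3 / 2 * θ * ∑ i ∈ s, (lam i)⁻¹) := by
          rw [← exp_sum, ← exp_add, Finset.mul_sum]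
          simp only [mul_assoc]
      _ ≤ exp (-(θ * t / 4)) := by
          gcongr
          nlinarith
  rw [← ofReal_measureReal]
  exact ENNReal.ofReal_le_ofReal hchernoff

section RateSums

variable {a α : ℝ}

lemma summable_ite_lt_inv_mul_rpow (hα : 1 < α) (a : ℝ) (K : ℕ) :
    Summable fun k : ℕ => if K < k then (a * (k : ℝ) ^ α)⁻¹ else 0 := by
  refine (((summable_nat_rpow_inv.2 hα).mul_right a⁻¹).indicator {k | K < k}).congr fun k => ?_
  by_cases hk : K < k <;> simp [hk]

lemma tsum_ite_lt_inv_mul_rpow_le (ha : 0 < a) (hα : 1 < α) {K : ℕ} (hK : 0 < K) :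
    ∑' k : ℕ, (if K < k then (a * (k : ℝ) ^ α)⁻¹ else 0) ≤ a⁻¹ * ((K : ℝ) ^ (1 - α) / (α - 1)) := by
  have hK' : (0 : ℝ) < K := by exact_mod_cast hK
  rw [← (summable_ite_lt_inv_mul_rpow hα a K).sum_add_tsum_nat_add (K + 1),
    Finset.sum_eq_zero fun k hk => if_neg (by simp at hk; omega), zero_add]
  simp only [show ∀ n, K < n + (K + 1) by omega, if_true, mul_inv]
  rw [tsum_mul_left]
  gcongr
  have hanti : AntitoneOn (fun x : ℝ => x ^ (-α)) (Set.Ici (K : ℝ)) :=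
    (antitoneOn_rpow_Ioi_of_exponent_nonpos (by linarith)).mono fun x hx => hK'.trans_le hx
  calc ∑' n : ℕ, (((n + (K + 1) : ℕ) : ℝ) ^ α)⁻¹
      = ∑' n : ℕ, ((n + K + 1 : ℕ) : ℝ) ^ (-α) := by
        simp_rw [rpow_neg (Nat.cast_nonneg _)]; rfl
    _ ≤ ∫ x in Set.Ioi (K : ℝ), x ^ (-α) :=
        hanti.tsum_comp_add_le_integral K (integrableOn_Ioi_rpow_of_lt (by linarith) hK')
          fun x hx => rpow_nonneg (hK'.le.trans (le_of_lt hx)) _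
    _ = (K : ℝ) ^ (1 - α) / (α - 1) := by
        rw [integral_Ioi_rpow_of_lt (by linarith) hK', neg_div, ← div_neg]
        ring_nf

lemma two_mul_natCast_le_of_sum_Ioc_inv_le (ha : 0 < a) (hα : 0 ≤ α) {K : ℕ} (hK : 0 < K) {t : ℝ}
    (hsum : ∑ k ∈ Finset.Ioc K (2 * K), (a * (k : ℝ) ^ α)⁻¹ ≤ t / 2) :
    2 * (K : ℝ) ≤ 2 ^ α * (a * (K : ℝ) ^ α) * t := by
  have hK' : (0 : ℝ) < K := by exact_mod_cast hK
  have hrate : 0 < a * ((2 * K : ℕ) : ℝ) ^ α := by positivity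
  have hcard : (K : ℝ) * (a * ((2 * K : ℕ) : ℝ) ^ α)⁻¹ ≤ t / 2 := by
    calc (K : ℝ) * (a * ((2 * K : ℕ) : ℝ) ^ α)⁻¹
        = (Finset.Ioc K (2 * K)).card • (a * ((2 * K : ℕ) : ℝ) ^ α)⁻¹ := by
          rw [nsmul_eq_mul, Nat.card_Ioc, show 2 * K - K = K by omega]
      _ ≤ ∑ k ∈ Finset.Ioc K (2 * K), (a * (k : ℝ) ^ α)⁻¹ := ?_
      _ ≤ t / 2 := hsum
    refine Finset.card_nsmul_le_sum _ (fun k : ℕ => (a * (k : ℝ) ^ α)⁻¹) _ fun k hk => ?_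
    rw [Finset.mem_Ioc] at hk
    have : (0 : ℝ) < k := by exact_mod_cast (hK.trans hk.1)
    gcongr
    exact_mod_cast hk.2
  rw [← div_eq_mul_inv, div_le_iff₀ hrate] at hcard
  rw [Nat.cast_mul, Nat.cast_ofNat, mul_rpow zero_le_two hK'.le] at hcard
  linarith

lemma sum_inv_mul_rpow_le_tsum_ite (ha : 0 ≤ a) (hα : 1 < α) {K : ℕ} {s : Finset ℕ}
    (hs : ∀ k ∈ s, K < k) :
    ∑ k ∈ s, (a * (k : ℝ) ^ α)⁻¹ ≤ ∑' k : ℕ, (if K < k then (a * (k : ℝ) ^ α)⁻¹ else 0) := by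
  rw [← Finset.sum_congr rfl fun k hk => if_pos (hs k hk)]
  exact (summable_ite_lt_inv_mul_rpow hα a K).sum_le_tsum s fun k _ => by
    split_ifs <;> positivity

end RateSums

theorem measure_lt_le_exp_of_holdingTime_tails {Ω : Type*} {m : MeasurableSpace Ω} {μ : Measure Ω}
    [IsProbabilityMeasure μ] {a α t : ℝ} (ha : 0 < a) (hα : 1 < α) {q₀ : ℕ}
    {H : ℕ → Ω → ℝ} {Q : Ω → ℕ} (hHm : ∀ i, Measurable (H i)) (hH0 : ∀ i ω, 0 ≤ H i ω)
    (hind : iIndepFun H μ)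
    (htail : ∀ i : ℕ, 1 ≤ i → ∀ s : ℝ, 0 ≤ s →
      μ {ω | s < H i ω} ≤ ENNReal.ofReal (exp (-(a * (i : ℝ) ^ α) * s)))
    (hQ : ∀ ω m, Q ω ≤ m ↔ ∑ k ∈ Finset.Icc (m + 1) q₀, H k ω ≤ t) {K : ℕ} (hK : 0 < K)
    (hsum : ∑' k : ℕ, (if K < k then (a * (k : ℝ) ^ α)⁻¹ else 0) ≤ t / 2) :
    μ {ω | K < Q ω} ≤ ENNReal.ofReal (exp (-(8 * 2 ^ α)⁻¹ * K)) := by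
  have hθ : 0 < a * (K : ℝ) ^ α / 4 := by positivity
  have hKs : ∀ k ∈ Finset.Icc (K + 1) q₀, K < k := fun k hk => by
    rw [Finset.mem_Icc] at hk; omega
  have hrate_mono : ∀ k ∈ Finset.Icc (K + 1) q₀, 4 * (a * (K : ℝ) ^ α / 4) ≤ a * (k : ℝ) ^ α :=
    fun k hk => by
      have : (K : ℝ) ≤ k := by exact_mod_cast (hKs k hk).le
      rw [mul_div_cancel₀ _ four_ne_zero]
      gcongr
  have hevent : {ω | K < Q ω} ⊆ {ω | t ≤ ∑ k ∈ Finset.Icc (K + 1) q₀, H k ω} := fun ω hω => by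
    simp only [Set.mem_ofPred_eq, ← not_le, hQ] at hω ⊢
    linarith
  have hfin : ∀ s : Finset ℕ, (∀ k ∈ s, K < k) → ∑ k ∈ s, (a * (k : ℝ) ^ α)⁻¹ ≤ t / 2 :=
    fun s hs => (sum_inv_mul_rpow_le_tsum_ite ha.le hα hs).trans hsum
  have hchernoff := measure_le_sum_le_exp_of_tail_le_exp hHm hind (fun i _ => hH0 i) hθ
    hrate_mono (fun i hi => htail i (hK.trans (hKs i hi))) (hfin _ hKs)
  have hK_le : 2 * (K : ℝ) ≤ 2 ^ α * (a * (K : ℝ) ^ α) * t :=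
    two_mul_natCast_le_of_sum_Ioc_inv_le ha (by linarith) hK
      (hfin _ fun k hk => (Finset.mem_Ioc.1 hk).1)
  refine (measure_mono hevent).trans (hchernoff.trans (ENNReal.ofReal_le_ofReal ?_))
  gcongr
  rw [neg_mul, neg_le_neg_iff, inv_mul_le_iff₀ (by positivity)]
  nlinarith

lemma tsum_ite_lt_inv_rate_lt {c α A t₀ C : ℝ} (hc : 0 < c) (hα : 1 < α) (hA : 0 < A)
    (ht₀ : 0 < t₀) (hC0 : 0 < C) (hC : 2 / (c * (α - 1)) < C ^ (α - 1)) {K : ℕ}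
    (hK : C * t₀ ^ (-(1 : ℝ) / (α - 1)) * A ≤ K) :
    ∑' k : ℕ, (if K < k then (c * A ^ (1 - α) * (k : ℝ) ^ α)⁻¹ else 0) < t₀ / 2 := by
  have hα' : 0 < α - 1 := by linarith
  have hCTA : 0 < C * t₀ ^ (-(1 : ℝ) / (α - 1)) * A := by positivity
  have hK0 : 0 < K := by exact_mod_cast hCTA.trans_le hK
  have hKpow : (K : ℝ) ^ (1 - α) ≤ C ^ (1 - α) * t₀ * A ^ (1 - α) := by
    calc (K : ℝ) ^ (1 - α) ≤ (C * t₀ ^ (-(1 : ℝ) / (α - 1)) * A) ^ (1 - α) :=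
          rpow_le_rpow_of_nonpos hCTA hK (by linarith)
      _ = C ^ (1 - α) * t₀ * A ^ (1 - α) := by
          rw [mul_rpow (by positivity) hA.le, mul_rpow hC0.le (by positivity), ← rpow_mul ht₀.le,
            show -(1 : ℝ) / (α - 1) * (1 - α) = 1 by field_simp; ring, rpow_one]
  have hCpow : C ^ (1 - α) < c * (α - 1) / 2 := by
    rw [show 1 - α = -(α - 1) by ring, rpow_neg hC0.le, ← inv_div]
    exact inv_strictAnti₀ (by positivity) hC
  calc ∑' k : ℕ, (if K < k then (c * A ^ (1 - α) * (k : ℝ) ^ α)⁻¹ else 0)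
      ≤ (c * A ^ (1 - α))⁻¹ * ((K : ℝ) ^ (1 - α) / (α - 1)) :=
        tsum_ite_lt_inv_mul_rpow_le (by positivity) hα hK0
    _ ≤ (c * A ^ (1 - α))⁻¹ * (C ^ (1 - α) * t₀ * A ^ (1 - α) / (α - 1)) := by gcongr
    _ = C ^ (1 - α) * t₀ / (c * (α - 1)) := by
        have : A ^ (1 - α) ≠ 0 := by positivity
        field_simp
    _ < c * (α - 1) / 2 * t₀ / (c * (α - 1)) := by gcongr
    _ = t₀ / 2 := by field_simp

/-- consider a pure death chain `Q` on the nonnegative integers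
jumping from `i` to `i−1` at rate at least `c·A^{1−α}·i^α` (`c > 0`, `α > 1`,
`A ≥ 1`), encoded by its holding times `H i` at each state `i` (independent, with
tails dominated by the exponential of rate `c·A^{1−α}·i^α`): starting from `q₀`,
`Q t ≤ m` iff `Σ_{m<k≤q₀} H k ≤ t`. Then there is `c₃ > 0` (depending on `c, α`)
such that `P(Q_{t₀} > K) ≤ exp(−c₃K)` whenever
`Σ_{k>K} (c·A^{1−α}·k^α)^{−1} < t₀/2`; in particular there are `C, c' > 0`
(depending on `c, α`) such that, with `K = ⌈C t₀^{−1/(α−1)} A⌉`,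
`P(Q_{t₀} > K) ≤ exp(−c' A)` whenever `t₀ ≤ 1`. -/
theorem stmt19 (c α : ℝ) (hc : 0 < c) (hα : 1 < α) :
    ∃ c₃ > (0 : ℝ), ∃ C > (0 : ℝ), ∃ c' > (0 : ℝ),
      ∀ (A : ℝ), 1 ≤ A → ∀ (t₀ : ℝ), 0 < t₀ →
      ∀ (Ω : Type) [MeasureSpace Ω] [IsProbabilityMeasure (ℙ : Measure Ω)]
        (q₀ : ℕ) (H : ℕ → Ω → ℝ) (Q : ℝ → Ω → ℕ),
        (∀ i, Measurable (H i)) →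
        (∀ i ω, 0 ≤ H i ω) →
        iIndepFun H ℙ →
        (∀ i : ℕ, 1 ≤ i → ∀ s : ℝ, 0 ≤ s →
          ℙ {ω | s < H i ω}
            ≤ ENNReal.ofReal (Real.exp (-(c * A ^ (1 - α) * (i : ℝ) ^ α) * s))) →
        (∀ t : ℝ, 0 ≤ t → ∀ ω, ∀ m : ℕ,
          (Q t ω ≤ m ↔ ∑ k ∈ Finset.Icc (m + 1) q₀, H k ω ≤ t)) →
        (∀ K : ℕ, 1 ≤ K →
          (∑' k : ℕ, if K < k then (c * A ^ (1 - α) * (k : ℝ) ^ α)⁻¹ else 0) < t₀ / 2 →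
          ℙ {ω | K < Q t₀ ω} ≤ ENNReal.ofReal (Real.exp (-c₃ * K))) ∧
        (t₀ ≤ 1 →
          ℙ {ω | (⌈C * t₀ ^ (-(1 : ℝ) / (α - 1)) * A⌉₊ : ℕ) < Q t₀ ω}
            ≤ ENNReal.ofReal (Real.exp (-c' * A))) := by
  have hα' : 0 < α - 1 := by linarith
  set C := (2 / (c * (α - 1))) ^ (α - 1)⁻¹ + 1
  have hC : 2 / (c * (α - 1)) < C ^ (α - 1) := by
    conv_lhs => rw [← rpow_inv_rpow (by positivity : 0 ≤ 2 / (c * (α - 1))) hα'.ne']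
    exact rpow_lt_rpow (by positivity) (lt_add_one _) hα'
  refine ⟨(8 * 2 ^ α)⁻¹, by positivity, C, by positivity, (8 * 2 ^ α)⁻¹, by positivity, ?_⟩
  intro A hA t₀ ht₀ Ω _ _ q₀ H Q hHm hH0 hind htail hQ
  refine ⟨fun K hK hsum => measure_lt_le_exp_of_holdingTime_tails (by positivity) hα hHm hH0 hind
    htail (hQ t₀ ht₀.le) hK hsum.le, fun ht₁ => ?_⟩
  have hT : 1 ≤ t₀ ^ (-(1 : ℝ) / (α - 1)) :=
    one_le_rpow_of_pos_of_le_one_of_nonpos ht₀ ht₁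
      (div_nonpos_of_nonpos_of_nonneg (by norm_num) hα'.le)
  have hAK : A ≤ ⌈C * t₀ ^ (-(1 : ℝ) / (α - 1)) * A⌉₊ := by
    refine le_trans ?_ (Nat.le_ceil _)
    have : 1 ≤ C * t₀ ^ (-(1 : ℝ) / (α - 1)) :=
      one_le_mul_of_one_le_of_one_le (le_add_of_nonneg_left (by positivity)) hT
    nlinarith
  have hK : 1 ≤ ⌈C * t₀ ^ (-(1 : ℝ) / (α - 1)) * A⌉₊ := by exact_mod_cast hA.trans hAK
  refine (measure_lt_le_exp_of_holdingTime_tails (by positivity) hα hHm hH0 hind htail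
    (hQ t₀ ht₀.le) hK (tsum_ite_lt_inv_rate_lt hc hα (by linarith) ht₀ (by positivity) hC
    (Nat.le_ceil _)).le).trans (ENNReal.ofReal_le_ofReal (exp_le_exp.2 ?_))
  rw [neg_mul, neg_mul, neg_le_neg_iff]
  gcongr
end
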